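/- arXiv:2104.04002 — 5 statements merged into one kernel-verified Lean document; each statement's English description precedes it below -/
import Mathlib

section
/- Let E be a Dedekind complete vector lattice, F a universal completion of E, (P_k)_{k≥1} a sequence of band projections on E with P_k ↑ I, and (x_n)_{n≥1} a sequence in E. If for each k the sequence (P_k x_n)_{n≥1} converges in order in E, then (x_n)_{n≥1} converges in order in F. -/
/-!
Let `l k` be the order limit of `P k (x n)`. Uniqueness of order limits gives
`l k = P k (l (k + 1))`, and the tail suprema `c k b = sup_{n ≥ b} |P k (x n) - l k|` satisfy
`c k b = P k (c (k + 1) b)` because band projections commute with `|·|` and with suprema.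
A positive sequence that is consistent in this sense is increasing with pairwise disjoint
increments, so lateral completeness gives it a supremum in `F`.

The limit is `L = sup_k (l k)⁺ - sup_k (l k)⁻`, and `|x n - L| ≤ z b := sup_k c k b` for
`n ≥ b`: pass to the supremum over `k` in `|P k (x n) - l k| ≤ c k b`, using that `P k y ↑ y`
still holds in `F` since `E` is an ideal of `F`. Finally `z b ↓ 0`: by order density it suffices to
rule out `0 < e ≤ z b` for all `b` with `e ∈ E`, and such an `e` has `P k e ≤ c k b` for all
`b`, hence `P k e = 0` for all `k`.
-/

universe u

def OrderConvNet {E : Type u} [Lattice E] [AddCommGroup E] {A : Type*} [Preorder A]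
    (x : A → E) (l : E) : Prop :=
  ∃ (B : Type u) (leB : B → B → Prop) (y : B → E),
    Nonempty B ∧
    (∀ b, leB b b) ∧
    (∀ b₁ b₂ b₃, leB b₁ b₂ → leB b₂ b₃ → leB b₁ b₃) ∧
    (∀ b₁ b₂, ∃ b₃, leB b₁ b₃ ∧ leB b₂ b₃) ∧
    (∀ b₁ b₂, leB b₁ b₂ → y b₂ ≤ y b₁) ∧
    IsGLB (Set.range y) 0 ∧
    (∀ b, ∃ a₀, ∀ a, a₀ ≤ a → |x a - l| ≤ y b)

def DedekindComplete (E : Type*) [Lattice E] : Prop :=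
  ∀ S : Set E, S.Nonempty → BddAbove S → ∃ s, IsLUB S s

def LaterallyComplete (E : Type*) [Lattice E] [AddCommGroup E] : Prop :=
  ∀ S : Set E, (∀ x ∈ S, 0 ≤ x) → (S.Pairwise fun a b => a ⊓ b = 0) → ∃ s, IsLUB S s

def IsBandProjection {E : Type*} [Lattice E] [AddCommGroup E] [Module ℝ E]
    (P : E →ₗ[ℝ] E) : Prop :=
  (∀ x, P (P x) = P x) ∧ ∀ x : E, 0 ≤ x → 0 ≤ P x ∧ P x ≤ x

open Set

section LatticeOrderedGroup

variable {α : Type*} [Lattice α] [AddCommGroup α] [AddLeftMono α]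

theorem add_eq_sup_of_inf_eq_zero {a b : α} (h : a ⊓ b = 0) : a + b = a ⊔ b := by
  rw [← inf_add_sup a b, h, zero_add]

theorem posPart_sub_of_inf_eq_zero {a b : α} (h : a ⊓ b = 0) : (a - b)⁺ = a := by
  have h' := inf_eq_sub_posPart_sub a b
  rw [h, eq_comm, sub_eq_zero] at h'
  exact h'.symm

theorem inf_le_of_isLUB {S : Set α} {s c d : α} (hS : IsLUB S s) (h : ∀ t ∈ S, c ⊓ t ≤ d) :
    c ⊓ s ≤ d := by
  have hs : s ≤ d + (s - c)⁺ := hS.2 fun t ht =>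
    calc t = t ⊓ c + (t - c)⁺ := by rw [inf_eq_sub_posPart_sub, sub_add_cancel]
      _ ≤ d + (s - c)⁺ := add_le_add (inf_comm t c ▸ h t ht)
          (posPart_mono (sub_le_sub_right (hS.1 ht) c))
  rw [inf_comm, inf_eq_sub_posPart_sub]
  exact sub_le_iff_le_add.2 hs

theorem sub_sub_sub_le_of_isLUB {p q r s : ℕ → α} {p' q' r' s' c : α}
    (hp : Monotone p) (hs : Monotone s) (hp' : IsLUB (range p) p') (hs' : IsLUB (range s) s')
    (hq' : ∀ M, q M ≤ q') (hr' : ∀ M, r M ≤ r') (h : ∀ M, p M - q M - (r M - s M) ≤ c) :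
    p' - q' - (r' - s') ≤ c := by
  have hsplit : ∀ a b d e : α, a - b - (d - e) = a + e - (b + d) := fun _ _ _ _ => by abel
  have : p' + s' ≤ c + (q' + r') := (hp'.add hs').2 <| by
    rintro _ ⟨_, ⟨M, rfl⟩, _, ⟨N, rfl⟩, rfl⟩
    calc p M + s N ≤ p (max M N) + s (max M N) :=
          add_le_add (hp (le_max_left M N)) (hs (le_max_right M N))
      _ ≤ c + (q (max M N) + r (max M N)) := sub_le_iff_le_add.1 (hsplit .. ▸ h (max M N))
      _ ≤ c + (q' + r') := by gcongr; exacts [hq' _, hr' _]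
  rw [hsplit]
  exact sub_le_iff_le_add.2 this

theorem abs_sub_sub_sub_le_of_isLUB {p q r s : ℕ → α} {p' q' r' s' c : α}
    (hp : Monotone p) (hq : Monotone q) (hr : Monotone r) (hs : Monotone s)
    (hp' : IsLUB (range p) p') (hq' : IsLUB (range q) q') (hr' : IsLUB (range r) r')
    (hs' : IsLUB (range s) s') (h : ∀ M, |p M - q M - (r M - s M)| ≤ c) :
    |p' - q' - (r' - s')| ≤ c := by
  refine abs_le'.2 ⟨sub_sub_sub_le_of_isLUB hp hs hp' hs' (fun M => hq'.1 ⟨M, rfl⟩)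
    (fun M => hr'.1 ⟨M, rfl⟩) fun M => (le_abs_self _).trans (h M), ?_⟩
  rw [neg_sub]
  exact sub_sub_sub_le_of_isLUB hr hq hr' hq' (fun M => hs'.1 ⟨M, rfl⟩) (fun M => hp'.1 ⟨M, rfl⟩)
    fun M => (neg_sub (p M - q M) (r M - s M)) ▸ (neg_le_abs _).trans (h M)

def increments (u : ℕ → α) : ℕ → α
  | 0 => u 0
  | m + 1 => u (m + 1) - u m

theorem LaterallyComplete.exists_isLUB_range (hα : LaterallyComplete α) {u : ℕ → α}
    (hu0 : 0 ≤ u 0) (hu : Monotone u) (hdisj : ∀ M, u M ⊓ (u (M + 1) - u M) = 0) :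
    ∃ s, IsLUB (range u) s := by
  have hu_nonneg : ∀ m, 0 ≤ u m := fun m => hu0.trans (hu (Nat.zero_le m))
  have he_nonneg : ∀ m, 0 ≤ increments u m
    | 0 => hu0
    | m + 1 => sub_nonneg.2 (hu m.le_succ)
  have he_le : ∀ m, increments u m ≤ u m
    | 0 => le_rfl
    | m + 1 => sub_le_self _ (hu_nonneg m)
  have he_disj : ∀ m m', m < m' → increments u m ⊓ increments u m' = 0 := by
    rintro m (_ | M) hmM
    · omega
    · refine le_antisymm ?_ (le_inf (he_nonneg m) (he_nonneg _))
      exact (inf_le_inf_right _ ((he_le m).trans (hu (Nat.lt_succ_iff.1 hmM)))).trans_eq (hdisj M)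
  obtain ⟨s, hs⟩ := hα (range (increments u)) (by rintro _ ⟨m, rfl⟩; exact he_nonneg m) <| by
    rintro _ ⟨m, rfl⟩ _ ⟨m', rfl⟩ hne
    rcases lt_trichotomy m m' with h | rfl | h
    · exact he_disj m m' h
    · exact absurd rfl hne
    · rw [inf_comm]; exact he_disj m' m h
  refine ⟨s, ?_, fun W hW => hs.2 ?_⟩
  · rintro _ ⟨M, rfl⟩
    induction M with
    | zero => exact hs.1 ⟨0, rfl⟩
    | succ M ih =>
      rw [← add_sub_cancel (u M) (u (M + 1)), add_eq_sup_of_inf_eq_zero (hdisj M)]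
      exact sup_le ih (hs.1 ⟨M + 1, rfl⟩)
  · rintro _ ⟨m, rfl⟩
    exact (he_le m).trans (hW ⟨m, rfl⟩)

end LatticeOrderedGroup

namespace IsBandProjection

variable {α : Type*} [Lattice α] [AddCommGroup α] [Module ℝ α] {P Q : α →ₗ[ℝ] α}

theorem nonneg (hP : IsBandProjection P) {a : α} (ha : 0 ≤ a) : 0 ≤ P a := (hP.2 a ha).1

theorem le_self (hP : IsBandProjection P) {a : α} (ha : 0 ≤ a) : P a ≤ a := (hP.2 a ha).2

variable [AddLeftMono α]

theorem monotone (hP : IsBandProjection P) : Monotone P := fun a b h => by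
  simpa only [map_sub, sub_nonneg] using hP.nonneg (sub_nonneg.2 h)

theorem sub_map_le_sub_map (hP : IsBandProjection P) {a b : α} (h : a ≤ b) :
    a - P a ≤ b - P b := by
  have := hP.le_self (sub_nonneg.2 h)
  rw [map_sub] at this
  rwa [sub_le_sub_iff, add_comm, ← sub_le_sub_iff]

theorem map_eq_self_of_le (hP : IsBandProjection P) {u v : α} (hv : 0 ≤ v) (hvu : v ≤ u)
    (hu : P u = u) : P v = v := by
  have h := hP.sub_map_le_sub_map hvu
  rw [hu, sub_self, sub_nonpos] at h
  exact le_antisymm (hP.le_self hv) h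

theorem map_inf_sub_map_eq_zero (hP : IsBandProjection P) {w : α} (hw : 0 ≤ w) :
    P w ⊓ (w - P w) = 0 := by
  have hv : 0 ≤ P w ⊓ (w - P w) := le_inf (hP.nonneg hw) (sub_nonneg.2 (hP.le_self hw))
  refine le_antisymm ?_ hv
  calc P w ⊓ (w - P w) = P (P w ⊓ (w - P w)) := (hP.map_eq_self_of_le hv inf_le_left (hP.1 w)).symm
    _ ≤ P (w - P w) := hP.monotone inf_le_right
    _ = 0 := by rw [map_sub, hP.1, sub_self]

theorem map_posPart (hP : IsBandProjection P) (a : α) : P a⁺ = (P a)⁺ := by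
  have hdisj : P a⁺ ⊓ P a⁻ = 0 := le_antisymm
    ((inf_le_inf (hP.le_self (posPart_nonneg a)) (hP.le_self (negPart_nonneg a))).trans_eq
      (posPart_inf_negPart_eq_zero a))
    (le_inf (hP.nonneg (posPart_nonneg a)) (hP.nonneg (negPart_nonneg a)))
  conv_rhs => rw [← posPart_sub_negPart a, map_sub, posPart_sub_of_inf_eq_zero hdisj]

theorem map_negPart (hP : IsBandProjection P) (a : α) : P a⁻ = (P a)⁻ := by
  rw [← posPart_neg, hP.map_posPart, map_neg, posPart_neg]

theorem map_abs (hP : IsBandProjection P) (a : α) : P |a| = |P a| := by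
  rw [← posPart_add_negPart, map_add, hP.map_posPart, hP.map_negPart, posPart_add_negPart]

theorem abs_map_le (hP : IsBandProjection P) (a : α) : |P a| ≤ |a| :=
  hP.map_abs a ▸ hP.le_self (abs_nonneg a)

theorem isLUB_image (hP : IsBandProjection P) {S : Set α} {s : α} (hS : IsLUB S s) :
    IsLUB (P '' S) (P s) := by
  refine ⟨hP.monotone.mem_upperBounds_image hS.1, fun W hW => ?_⟩
  have : s ≤ W + (s - P s) := hS.2 fun t ht =>
    calc t = P t + (t - P t) := (add_sub_cancel _ _).symm
      _ ≤ W + (s - P s) := add_le_add (hW ⟨t, ht, rfl⟩) (hP.sub_map_le_sub_map (hS.1 ht))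
  rwa [← sub_le_iff_le_add, sub_sub_cancel] at this

theorem comp_eq_of_le (hP : IsBandProjection P) (hQ : IsBandProjection Q)
    (hPQ : ∀ z, 0 ≤ z → P z ≤ Q z) (z : α) : P (Q z) = P z := by
  have hkill : ∀ w, 0 ≤ w → P (w - Q w) = 0 := fun w hw => by
    have hw' : 0 ≤ w - Q w := sub_nonneg.2 (hQ.le_self hw)
    refine le_antisymm ?_ (hP.nonneg hw')
    calc P (w - Q w) ≤ Q (w - Q w) := hPQ _ hw'
      _ = 0 := by rw [map_sub, hQ.1, sub_self]
  have : P (z - Q z) = 0 := by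
    rw [← posPart_sub_negPart z, map_sub Q, sub_sub_sub_comm, map_sub P,
      hkill _ (posPart_nonneg z), hkill _ (negPart_nonneg z), sub_zero]
  rwa [map_sub, sub_eq_zero, eq_comm] at this

end IsBandProjection

section BandProjectionSequence

variable {α : Type*} [Lattice α] [AddCommGroup α] [Module ℝ α] {P : ℕ → α →ₗ[ℝ] α}
  {w : ℕ → α}

theorem monotone_bandProjection_apply (hP_mono : ∀ k, ∀ x : α, 0 ≤ x → P k x ≤ P (k + 1) x)
    {x : α} (hx : 0 ≤ x) : Monotone fun k => P k x :=
  monotone_nat_of_le_succ fun k => hP_mono k x hx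

def IsConsistent (P : ℕ → α →ₗ[ℝ] α) (w : ℕ → α) : Prop :=
  ∀ M, P M (w (M + 1)) = w M

theorem IsConsistent.monotone (hP : ∀ k, IsBandProjection (P k)) (hw : IsConsistent P w)
    (hw0 : ∀ M, 0 ≤ w M) : Monotone w :=
  monotone_nat_of_le_succ fun M => hw M ▸ (hP M).le_self (hw0 (M + 1))

variable [AddLeftMono α]

theorem bandProjection_comp_of_le (hP : ∀ k, IsBandProjection (P k))
    (hP_mono : ∀ k, ∀ x : α, 0 ≤ x → P k x ≤ P (k + 1) x) {j k : ℕ} (hjk : j ≤ k) (z : α) :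
    P j (P k z) = P j z :=
  (hP j).comp_eq_of_le (hP k) (fun _ hx => monotone_bandProjection_apply hP_mono hx hjk) z

theorem IsConsistent.map_of_le (hP : ∀ k, IsBandProjection (P k))
    (hP_mono : ∀ k, ∀ x : α, 0 ≤ x → P k x ≤ P (k + 1) x) (hw : IsConsistent P w) {K M : ℕ}
    (hKM : K ≤ M) : P K (w M) = w K := by
  induction hKM with
  | refl => rw [← hw K, (hP K).1]
  | @step M hKM ih => rw [← bandProjection_comp_of_le hP hP_mono hKM, hw M, ih]

theorem IsConsistent.inf_sub_eq_zero (hP : ∀ k, IsBandProjection (P k)) (hw : IsConsistent P w)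
    (hw0 : ∀ M, 0 ≤ w M) (M : ℕ) : w M ⊓ (w (M + 1) - w M) = 0 :=
  hw M ▸ (hP M).map_inf_sub_map_eq_zero (hw0 (M + 1))

theorem IsConsistent.posPart (hP : ∀ k, IsBandProjection (P k)) (hw : IsConsistent P w) :
    IsConsistent P fun M => (w M)⁺ := fun M => by
  simp only [(hP M).map_posPart, hw M]

theorem IsConsistent.negPart (hP : ∀ k, IsBandProjection (P k)) (hw : IsConsistent P w) :
    IsConsistent P fun M => (w M)⁻ := fun M => by
  simp only [(hP M).map_negPart, hw M]

end BandProjectionSequence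

section IdealEmbedding

variable {E F : Type*} [Lattice E] [AddCommGroup E] [Module ℝ E] [Lattice F] [AddCommGroup F]
  [Module ℝ F] {i : E →ₗ[ℝ] F}

namespace LinearMap

theorem monotone_of_map_sup (hi_sup : ∀ x y : E, i (x ⊔ y) = i x ⊔ i y) : Monotone i :=
  fun a b h => by rw [← sup_eq_right, ← hi_sup, sup_eq_right.2 h]

theorem le_of_map_le_of_map_sup (hi_inj : Function.Injective i)
    (hi_sup : ∀ x y : E, i (x ⊔ y) = i x ⊔ i y) {a b : E} (h : i a ≤ i b) : a ≤ b := by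
  rw [← sup_eq_right] at h ⊢
  exact hi_inj (by rw [hi_sup, h])

theorem map_abs_of_map_sup (hi_sup : ∀ x y : E, i (x ⊔ y) = i x ⊔ i y) (a : E) :
    i |a| = |i a| := by
  rw [abs, abs, hi_sup, map_neg]

theorem isGLB_zero_of_orderDense (hi_inj : Function.Injective i)
    (hi_sup : ∀ x y : E, i (x ⊔ y) = i x ⊔ i y)
    (hi_dense : ∀ w : F, 0 < w → ∃ z : E, 0 < i z ∧ i z ≤ w) {ι : Type*} {z : ι → F}
    (hz : ∀ b, 0 ≤ z b) (h : ∀ e : E, 0 ≤ e → (∀ b, i e ≤ z b) → e ≤ 0) :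
    IsGLB (Set.range z) 0 := by
  refine ⟨by rintro _ ⟨b, rfl⟩; exact hz b, fun c hc => ?_⟩
  by_contra hc0
  obtain ⟨e, he0, hec⟩ := hi_dense c⁺ <|
    (posPart_nonneg c).lt_of_ne fun h => hc0 (posPart_eq_zero.1 h.symm)
  have he : 0 ≤ e := le_of_map_le_of_map_sup hi_inj hi_sup (by rw [map_zero]; exact he0.le)
  have hie : i e ≤ 0 := map_zero i ▸
    monotone_of_map_sup hi_sup (h e he fun b => hec.trans (sup_le (hc ⟨b, rfl⟩) (hz b)))
  exact hie.not_gt he0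

variable [AddLeftMono E] [AddLeftMono F]

theorem map_inf_of_map_sup (hi_sup : ∀ x y : E, i (x ⊔ y) = i x ⊔ i y) (a b : E) :
    i (a ⊓ b) = i a ⊓ i b := by
  rw [← neg_neg (a ⊓ b), neg_inf, map_neg, hi_sup, map_neg, map_neg, neg_sup, neg_neg, neg_neg]

theorem isLUB_image_of_ideal (hi_inj : Function.Injective i)
    (hi_sup : ∀ x y : E, i (x ⊔ y) = i x ⊔ i y)
    (hi_ideal : ∀ (x : E) (w : F), |w| ≤ |i x| → ∃ z : E, i z = w)
    {S : Set E} {s : E} (hS : IsLUB S s) (hne : S.Nonempty) : IsLUB (i '' S) (i s) := by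
  refine ⟨(monotone_of_map_sup hi_sup).mem_upperBounds_image hS.1, fun W hW => ?_⟩
  obtain ⟨t₀, ht₀⟩ := hne
  have hgap : ∀ t ∈ S, (i s - W)⁺ ≤ i (s - t) := fun t ht => by
    rw [map_sub]
    exact sup_le (sub_le_sub_left (hW ⟨t, ht, rfl⟩) _)
      (sub_nonneg.2 (monotone_of_map_sup hi_sup (hS.1 ht)))
  obtain ⟨y, hy⟩ := hi_ideal (s - t₀) (i s - W)⁺ <| by
    rw [abs_of_nonneg (posPart_nonneg _), abs_of_nonneg ((posPart_nonneg _).trans (hgap t₀ ht₀))]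
    exact hgap t₀ ht₀
  have hs : s ≤ s - y := hS.2 fun t ht =>
    le_sub_comm.1 (le_of_map_le_of_map_sup hi_inj hi_sup (hy ▸ hgap t ht))
  have hy0 : i y ≤ 0 := map_zero i ▸ monotone_of_map_sup hi_sup ((le_sub_self_iff s).1 hs)
  exact sub_nonpos.1 ((le_posPart _).trans (hy ▸ hy0))

end LinearMap

variable [AddLeftMono E] [AddLeftMono F] {P : ℕ → E →ₗ[ℝ] E} {w : ℕ → E}

theorem IsConsistent.exists_isLUB_map (hF : LaterallyComplete F)
    (hi_sup : ∀ x y : E, i (x ⊔ y) = i x ⊔ i y) (hP : ∀ k, IsBandProjection (P k))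
    (hw : IsConsistent P w) (hw0 : ∀ M, 0 ≤ w M) : ∃ s, IsLUB (range fun M => i (w M)) s := by
  refine hF.exists_isLUB_range (map_zero i ▸ LinearMap.monotone_of_map_sup hi_sup (hw0 0))
    ((LinearMap.monotone_of_map_sup hi_sup).comp (hw.monotone hP hw0)) fun M => ?_
  rw [← map_sub, ← LinearMap.map_inf_of_map_sup hi_sup, hw.inf_sub_eq_zero hP hw0, map_zero]

theorem IsConsistent.le_of_map_le_of_isLUB (hi_inj : Function.Injective i)
    (hi_sup : ∀ x y : E, i (x ⊔ y) = i x ⊔ i y) (hP : ∀ k, IsBandProjection (P k))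
    (hP_mono : ∀ k, ∀ x : E, 0 ≤ x → P k x ≤ P (k + 1) x) (hw : IsConsistent P w)
    (hw0 : ∀ M, 0 ≤ w M) {s : F} (hs : IsLUB (range fun M => i (w M)) s) {K : ℕ} {t : E}
    (ht0 : 0 ≤ t) (htK : P K t = t) (hts : i t ≤ s) : t ≤ w K := by
  refine LinearMap.le_of_map_le_of_map_sup hi_inj hi_sup ?_
  rw [← inf_eq_left.2 hts]
  refine inf_le_of_isLUB hs ?_
  rintro _ ⟨M, rfl⟩
  rw [← LinearMap.map_inf_of_map_sup hi_sup]
  refine LinearMap.monotone_of_map_sup hi_sup ?_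
  rcases le_total M K with hMK | hKM
  · exact inf_le_right.trans (hw.monotone hP hw0 hMK)
  · have hfix : P K (t ⊓ w M) = t ⊓ w M :=
      (hP K).map_eq_self_of_le (le_inf ht0 (hw0 M)) inf_le_left htK
    calc t ⊓ w M = P K (t ⊓ w M) := hfix.symm
      _ ≤ P K (w M) := (hP K).monotone inf_le_right
      _ = w K := hw.map_of_le hP hP_mono hKM

end IdealEmbedding

section OrderConvergence

variable {E : Type u} [Lattice E] [AddCommGroup E] {f : ℕ → E} {l : E}

theorem OrderConvNet.of_antitone {z : ℕ → E} (hz : Antitone z) (hz0 : IsGLB (range z) 0)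
    (h : ∀ b n, b ≤ n → |f n - l| ≤ z b) : OrderConvNet f l :=
  ⟨ULift.{u} ℕ, fun b₁ b₂ => b₁.down ≤ b₂.down, fun b => z b.down, ⟨⟨0⟩⟩, fun _ => le_rfl,
    fun _ _ _ => le_trans, fun b₁ b₂ => ⟨⟨max b₁.down b₂.down⟩, le_max_left _ _, le_max_right _ _⟩,
    fun _ _ h => hz h, Equiv.ulift.surjective.range_comp z ▸ hz0, fun b => ⟨b.down, h b.down⟩⟩

theorem OrderConvNet.bddAbove_image_Ici (h : OrderConvNet f l) (b : ℕ) :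
    BddAbove ((fun n => |f n - l|) '' Ici b) := by
  obtain ⟨B, -, y, ⟨β⟩, -, -, -, -, -, hfy⟩ := h
  obtain ⟨a₀, ha₀⟩ := hfy β
  refine BddAbove.mono ?_
    (((finite_Iio a₀).image fun n => |f n - l|).bddAbove.union (bddAbove_Iic (a := y β)))
  rintro _ ⟨n, -, rfl⟩
  rcases lt_or_ge n a₀ with hn | hn
  · exact Or.inl ⟨n, hn, rfl⟩
  · exact Or.inr (ha₀ n hn)

variable [AddLeftMono E]

theorem OrderConvNet.isGLB_of_isLUB_image_Ici (h : OrderConvNet f l) {c : ℕ → E}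
    (hc : ∀ b, IsLUB ((fun n => |f n - l|) '' Ici b) (c b)) : IsGLB (range c) 0 := by
  obtain ⟨B, -, y, -, -, -, -, -, hy, hfy⟩ := h
  refine ⟨?_, fun d hd => hy.2 ?_⟩
  · rintro _ ⟨b, rfl⟩
    exact (abs_nonneg _).trans ((hc b).1 ⟨b, self_mem_Ici, rfl⟩)
  · rintro _ ⟨β, rfl⟩
    obtain ⟨a₀, ha₀⟩ := hfy β
    exact (hd ⟨a₀, rfl⟩).trans ((hc a₀).2 (by rintro _ ⟨n, hn, rfl⟩; exact ha₀ n hn))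

theorem OrderConvNet.eq {l' : E} (h : OrderConvNet f l) (h' : OrderConvNet f l') : l = l' := by
  obtain ⟨B, -, y, -, -, -, -, -, hy, hfy⟩ := h
  obtain ⟨B', -, y', -, -, -, -, -, hy', hfy'⟩ := h'
  have hle : |l - l'| ≤ 0 := by
    refine (zero_add (0 : E) ▸ hy.add hy').2 ?_
    rintro _ ⟨_, ⟨β, rfl⟩, _, ⟨β', rfl⟩, rfl⟩
    obtain ⟨a₀, ha₀⟩ := hfy β
    obtain ⟨a₁, ha₁⟩ := hfy' β'
    calc |l - l'| = |(l - f (max a₀ a₁)) + (f (max a₀ a₁) - l')| := by rw [sub_add_sub_cancel]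
      _ ≤ |l - f (max a₀ a₁)| + |f (max a₀ a₁) - l'| := abs_add_le _ _
      _ ≤ y β + y' β' := by
          rw [abs_sub_comm]
          exact add_le_add (ha₀ _ (le_max_left _ _)) (ha₁ _ (le_max_right _ _))
  exact le_antisymm (sub_nonpos.1 ((le_abs_self _).trans hle))
    (sub_nonpos.1 (neg_sub l l' ▸ (neg_le_abs _).trans hle))

theorem OrderConvNet.map_bandProjection [Module ℝ E] {P : E →ₗ[ℝ] E} (hP : IsBandProjection P)
    (h : OrderConvNet f l) : OrderConvNet (fun n => P (f n)) (P l) := by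
  obtain ⟨B, leB, y, h₁, h₂, h₃, h₄, h₅, h₆, hfy⟩ := h
  refine ⟨B, leB, y, h₁, h₂, h₃, h₄, h₅, h₆, fun β => ?_⟩
  obtain ⟨a₀, ha₀⟩ := hfy β
  exact ⟨a₀, fun a ha => (map_sub P _ _ ▸ hP.abs_map_le _).trans (ha₀ a ha)⟩

end OrderConvergence

section BandProjectionLimits

variable {E F : Type u} [Lattice E] [AddCommGroup E] [Module ℝ E] [AddLeftMono E] [Lattice F]
  [AddCommGroup F] [Module ℝ F] [AddLeftMono F] {i : E →ₗ[ℝ] F} {P : ℕ → E →ₗ[ℝ] E}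
  {x l : ℕ → E}

theorem isConsistent_of_orderConvNet (hP : ∀ k, IsBandProjection (P k))
    (hP_mono : ∀ k, ∀ x : E, 0 ≤ x → P k x ≤ P (k + 1) x)
    (hl : ∀ k, OrderConvNet (fun n => P k (x n)) (l k)) : IsConsistent P l := fun M => by
  have h := (hl (M + 1)).map_bandProjection (hP M)
  simp only [bandProjection_comp_of_le hP hP_mono M.le_succ] at h
  exact h.eq (hl M)

theorem isConsistent_of_isLUB_image_Ici (hP : ∀ k, IsBandProjection (P k))
    (hP_mono : ∀ k, ∀ x : E, 0 ≤ x → P k x ≤ P (k + 1) x) (hl : IsConsistent P l)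
    {c : ℕ → ℕ → E} (hc : ∀ K b, IsLUB ((fun n => |P K (x n) - l K|) '' Ici b) (c K b))
    (b : ℕ) : IsConsistent P fun K => c K b := fun M => by
  have h := (hP M).isLUB_image (hc (M + 1) b)
  rw [image_image] at h
  simp only [(hP M).map_abs, map_sub, bandProjection_comp_of_le hP hP_mono M.le_succ, hl M] at h
  exact h.unique (hc M b)

theorem isGLB_zero_of_isConsistent (hi_inj : Function.Injective i)
    (hi_sup : ∀ x y : E, i (x ⊔ y) = i x ⊔ i y)
    (hi_dense : ∀ w : F, 0 < w → ∃ z : E, 0 < i z ∧ i z ≤ w)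
    (hP : ∀ k, IsBandProjection (P k)) (hP_mono : ∀ k, ∀ x : E, 0 ≤ x → P k x ≤ P (k + 1) x)
    (hP_sup : ∀ x : E, 0 ≤ x → IsLUB (Set.range fun k => P k x) x) {c : ℕ → ℕ → E}
    (hc0 : ∀ K b, 0 ≤ c K b) (hc : ∀ b, IsConsistent P fun K => c K b)
    (hc_glb : ∀ K, IsGLB (range (c K)) 0) {z : ℕ → F}
    (hz : ∀ b, IsLUB (range fun K => i (c K b)) (z b)) : IsGLB (range z) 0 := by
  refine LinearMap.isGLB_zero_of_orderDense hi_inj hi_sup hi_dense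
    (fun b => (map_zero i ▸ LinearMap.monotone_of_map_sup hi_sup (hc0 0 b)).trans
      ((hz b).1 ⟨0, rfl⟩)) fun e he hez => (hP_sup e he).2 ?_
  rintro _ ⟨K, rfl⟩
  refine (hc_glb K).2 ?_
  rintro _ ⟨b, rfl⟩
  exact (hc b).le_of_map_le_of_isLUB hi_inj hi_sup hP hP_mono (fun K => hc0 K b) (hz b)
    ((hP K).nonneg he) ((hP K).1 e)
    ((LinearMap.monotone_of_map_sup hi_sup ((hP K).le_self he)).trans (hez b))

theorem abs_map_sub_le_of_isLUB (hi_inj : Function.Injective i)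
    (hi_sup : ∀ x y : E, i (x ⊔ y) = i x ⊔ i y)
    (hi_ideal : ∀ (x : E) (w : F), |w| ≤ |i x| → ∃ z : E, i z = w)
    (hP : ∀ k, IsBandProjection (P k)) (hP_mono : ∀ k, ∀ x : E, 0 ≤ x → P k x ≤ P (k + 1) x)
    (hP_sup : ∀ x : E, 0 ≤ x → IsLUB (Set.range fun k => P k x) x) (hl : IsConsistent P l)
    {U V z : F} (hU : IsLUB (range fun M => i (l M)⁺) U)
    (hV : IsLUB (range fun M => i (l M)⁻) V) {y : E} (h : ∀ M, i |P M y - l M| ≤ z) :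
    |i y - (U - V)| ≤ z := by
  have hi := LinearMap.monotone_of_map_sup hi_sup
  have hlub : ∀ {a : E}, 0 ≤ a → IsLUB (range fun M => i (P M a)) (i a) := fun ha => by
    rw [range_comp' i]
    exact LinearMap.isLUB_image_of_ideal hi_inj hi_sup hi_ideal (hP_sup _ ha) (range_nonempty _)
  rw [← posPart_sub_negPart y, map_sub]
  refine abs_sub_sub_sub_le_of_isLUB
    (hi.comp (monotone_bandProjection_apply hP_mono (posPart_nonneg y)))
    (hi.comp (monotone_bandProjection_apply hP_mono (negPart_nonneg y)))
    (hi.comp ((hl.posPart hP).monotone hP fun _ => posPart_nonneg _))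
    (hi.comp ((hl.negPart hP).monotone hP fun _ => negPart_nonneg _))
    (hlub (posPart_nonneg y)) (hlub (negPart_nonneg y)) hU hV fun M => ?_
  simpa only [Function.comp_apply, ← map_sub, posPart_sub_negPart,
    ← LinearMap.map_abs_of_map_sup hi_sup] using h M

end BandProjectionLimits

theorem order_convergence_from_band_projections_general
    {E : Type u} [Lattice E] [AddCommGroup E] [Module ℝ E]
    [CovariantClass E E (· + ·) (· ≤ ·)]
    {F : Type u} [Lattice F] [AddCommGroup F] [Module ℝ F]
    [CovariantClass F F (· + ·) (· ≤ ·)]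
    (hE : DedekindComplete E)
    (hFlat : LaterallyComplete F)
    (i : E →ₗ[ℝ] F)
    (hi_inj : Function.Injective i)
    (hi_sup : ∀ x y : E, i (x ⊔ y) = i x ⊔ i y)
    (hi_ideal : ∀ (x : E) (w : F), |w| ≤ |i x| → ∃ z : E, i z = w)
    (hi_dense : ∀ w : F, 0 < w → ∃ z : E, 0 < i z ∧ i z ≤ w)
    (P : ℕ → E →ₗ[ℝ] E)
    (hP : ∀ k, IsBandProjection (P k))
    (hP_mono : ∀ k, ∀ x : E, 0 ≤ x → P k x ≤ P (k + 1) x)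
    (hP_sup : ∀ x : E, 0 ≤ x → IsLUB (Set.range fun k => P k x) x)
    (x : ℕ → E)
    (hconv : ∀ k, ∃ l : E, OrderConvNet (fun n => P k (x n)) l) :
    ∃ l : F, OrderConvNet (fun n => i (x n)) l := by
  choose l hl using hconv
  have hl_cons := isConsistent_of_orderConvNet hP hP_mono hl
  obtain ⟨U, hU⟩ := (hl_cons.posPart hP).exists_isLUB_map hFlat hi_sup hP fun _ => posPart_nonneg _
  obtain ⟨V, hV⟩ := (hl_cons.negPart hP).exists_isLUB_map hFlat hi_sup hP fun _ => negPart_nonneg _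
  choose c hc using fun K b =>
    hE _ ((nonempty_Ici (a := b)).image _) ((hl K).bddAbove_image_Ici b)
  have hc0 : ∀ K b, 0 ≤ c K b := fun K b => (abs_nonneg _).trans ((hc K b).1 ⟨b, self_mem_Ici, rfl⟩)
  have hc_cons := isConsistent_of_isLUB_image_Ici hP hP_mono hl_cons hc
  choose z hz using fun b => (hc_cons b).exists_isLUB_map hFlat hi_sup hP fun K => hc0 K b
  have hi := LinearMap.monotone_of_map_sup hi_sup
  have hz_anti : Antitone z := fun b b' hbb' => (hz b').2 <| by
    rintro _ ⟨K, rfl⟩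
    exact (hi ((hc K b').mono (hc K b) (image_mono (Ici_subset_Ici.2 hbb')))).trans
      ((hz b).1 ⟨K, rfl⟩)
  have hz_glb := isGLB_zero_of_isConsistent hi_inj hi_sup hi_dense hP hP_mono hP_sup hc0 hc_cons
    (fun K => (hl K).isGLB_of_isLUB_image_Ici (hc K)) hz
  refine ⟨U - V, OrderConvNet.of_antitone hz_anti hz_glb fun b n hbn => ?_⟩
  exact abs_map_sub_le_of_isLUB hi_inj hi_sup hi_ideal hP hP_mono hP_sup hl_cons hU hV
    fun M => (hi ((hc M b).1 ⟨n, hbn, rfl⟩)).trans ((hz b).1 ⟨M, rfl⟩)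

/-- Theorem. Let `E` be a Dedekind complete vector lattice, `F` a universal completion of
`E` (a universally complete vector lattice containing `E` as an order-dense ideal, here
via the lattice embedding `i`), `(P_k)` a sequence of band projections on `E` with
`P_k ↑ I`, and `(x_n)` a sequence in `E`.  If for each `k` the sequence `(P_k x_n)_n`
converges in order in `E`, then `(x_n)` converges in order in `F`. -/
theorem order_convergence_from_band_projections
    {E : Type u} [Lattice E] [AddCommGroup E] [Module ℝ E]
    [CovariantClass E E (· + ·) (· ≤ ·)]
    {F : Type u} [Lattice F] [AddCommGroup F] [Module ℝ F]
    [CovariantClass F F (· + ·) (· ≤ ·)]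
    (hE : DedekindComplete E)
    (hFded : DedekindComplete F) (hFlat : LaterallyComplete F)
    (i : E →ₗ[ℝ] F)
    (hi_inj : Function.Injective i)
    (hi_sup : ∀ x y : E, i (x ⊔ y) = i x ⊔ i y)
    (hi_ideal : ∀ (x : E) (w : F), |w| ≤ |i x| → ∃ z : E, i z = w)
    (hi_dense : ∀ w : F, 0 < w → ∃ z : E, 0 < i z ∧ i z ≤ w)
    (P : ℕ → E →ₗ[ℝ] E)
    (hP : ∀ k, IsBandProjection (P k))
    (hP_mono : ∀ k, ∀ x : E, 0 ≤ x → P k x ≤ P (k + 1) x)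
    (hP_sup : ∀ x : E, 0 ≤ x → IsLUB (Set.range fun k => P k x) x)
    (x : ℕ → E)
    (hconv : ∀ k, ∃ l : E, OrderConvNet (fun n => P k (x n)) l) :
    ∃ l : F, OrderConvNet (fun n => i (x n)) l :=
  order_convergence_from_band_projections_general hE hFlat i hi_inj hi_sup hi_ideal hi_dense P hP
    hP_mono hP_sup x hconv
end

section
/- In E = ℓ∞ (the vector lattice of bounded real sequences with pointwise order), let A = {(p, q) ∈ ℕ × ℕ : p ≤ q} be ordered coordinatewise, let x_{(p,q)} = q · Σ_{k=p}^{q} e_k where (e_k) are the standard unit sequences, and let P_k be the band projection onto the band of sequences vanishing outside {1, …, k}. Then: (i) for every k, the net (P_k x_α)_{α∈A} order converges to 0 in ℓ∞; (ii) for every α₀ ∈ A, the tail {x_α : α ≥ α₀} is not order bounded in ℓ∞; consequently the net (x_α)_{α∈A} is not order convergent. -/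
open BoundedContinuousFunction

universe u

/-- The index set `A = {(p, q) ∈ ℕ × ℕ : 1 ≤ p ≤ q}`, ordered coordinatewise. -/
abbrev IndexA : Type := {pq : ℕ × ℕ // 1 ≤ pq.1 ∧ pq.1 ≤ pq.2}

/-- The net `x_{(p,q)} = q · ∑_{k=p}^{q} e_k` in `ℓ∞ = ℕ →ᵇ ℝ`
(bounded real sequences with the pointwise order). -/
noncomputable def xNet (a : IndexA) : ℕ →ᵇ ℝ :=
  ofNormedAddCommGroup (fun n => if a.1.1 ≤ n ∧ n ≤ a.1.2 then (a.1.2 : ℝ) else 0)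
    continuous_of_discreteTopology (a.1.2 : ℝ)
    (by
      intro n
      try dsimp only
      split_ifs
      · simp
      · simp)

/-- `P_k`, the band projection of `ℓ∞` onto the band of sequences vanishing outside
`{1, …, k}`. -/
noncomputable def projBand (k : ℕ) (x : ℕ →ᵇ ℝ) : ℕ →ᵇ ℝ :=
  ofNormedAddCommGroup (fun n => if 1 ≤ n ∧ n ≤ k then x n else 0)
    continuous_of_discreteTopology ‖x‖
    (by
      intro n
      try dsimp only
      split_ifs
      · exact x.norm_coe_le_norm n
      · simp [norm_nonneg])

/-!
Since `x_{(p,q)}` is supported on `[p, q]`, `P_k x_{(p,q)} = 0` as soon as `p > k`, so each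
net `(P_k x_α)` is eventually `0`. On the other hand `x_{(p,n)}` takes the value `n` at `n`, so no
tail of the net is order bounded, whereas an order convergent net always has an order bounded
tail: `|x_α| ≤ |x_α - l| + |l| ≤ y_b + |l|`.
-/

section OrderConvNet

variable {E : Type u} [Lattice E] [AddCommGroup E] {A : Type*} [Preorder A]

theorem orderConvNet_of_eventually_eq {x : A → E} {l : E} (h : ∃ a₀, ∀ a, a₀ ≤ a → x a = l) :
    OrderConvNet x l := by
  obtain ⟨a₀, ha₀⟩ := h
  refine ⟨PUnit, fun _ _ => True, fun _ => 0, ⟨PUnit.unit⟩, fun _ => trivial,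
    fun _ _ _ _ _ => trivial, fun _ _ => ⟨PUnit.unit, trivial, trivial⟩,
    fun _ _ _ => le_rfl, by simp [Set.range_const], fun _ => ⟨a₀, fun a ha => ?_⟩⟩
  rw [ha₀ a ha, sub_self, abs, neg_zero, sup_idem]

theorem OrderConvNet.exists_tail_abs_le [AddLeftMono E] {x : A → E} {l : E}
    (h : OrderConvNet x l) : ∃ a₀ b, ∀ a, a₀ ≤ a → |x a| ≤ b := by
  obtain ⟨B, -, y, ⟨b⟩, -, -, -, -, -, hconv⟩ := h
  obtain ⟨a₀, ha₀⟩ := hconv b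
  refine ⟨a₀, y b + |l|, fun a ha => ?_⟩
  calc |x a| = |(x a - l) + l| := by rw [sub_add_cancel]
    _ ≤ |x a - l| + |l| := abs_add_le _ _
    _ ≤ y b + |l| := add_le_add_left (ha₀ a ha) _

end OrderConvNet

theorem projBand_xNet_eq_zero {k : ℕ} {a : IndexA} (hk : k < a.1.1) :
    projBand k (xNet a) = 0 := by
  ext n
  show (if 1 ≤ n ∧ n ≤ k then (if a.1.1 ≤ n ∧ n ≤ a.1.2 then (a.1.2 : ℝ) else 0) else 0) = 0
  split_ifs <;> first | rfl | omega

theorem xNet_apply_self (p n : ℕ) (hp : 1 ≤ p) (hpn : p ≤ n) :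
    xNet ⟨(p, n), hp, hpn⟩ n = n :=
  if_pos ⟨hpn, le_rfl⟩

theorem not_exists_xNet_tail_abs_le (a₀ : IndexA) :
    ¬ ∃ b : ℕ →ᵇ ℝ, ∀ a : IndexA, a₀ ≤ a → |xNet a| ≤ b := by
  rintro ⟨b, hb⟩
  obtain ⟨N, hN⟩ := exists_nat_gt ‖b‖
  set n := max a₀.1.2 N
  have hpn : a₀.1.1 ≤ n := a₀.2.2.trans (le_max_left _ _)
  have hbn : |xNet ⟨(a₀.1.1, n), a₀.2.1, hpn⟩ n| ≤ b n :=
    hb ⟨(a₀.1.1, n), a₀.2.1, hpn⟩ ⟨le_rfl, le_max_left _ _⟩ n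
  rw [xNet_apply_self _ _ a₀.2.1 hpn, Nat.abs_cast] at hbn
  have hNn : (N : ℝ) ≤ n := by exact_mod_cast le_max_right _ _
  linarith [(le_abs_self (b n)).trans (b.norm_coe_le_norm n)]

/-- In `E = ℓ∞`: (i) for every `k` the net `(P_k x_α)_{α ∈ A}` order converges to `0`;
(ii) for every `α₀ ∈ A` the tail `{x_α : α ≥ α₀}` is not order bounded in `ℓ∞`;
consequently the net `(x_α)_{α ∈ A}` is not order convergent. -/
theorem ellInfty_counterexample :
    (∀ k : ℕ, OrderConvNet (fun a : IndexA => projBand k (xNet a)) 0) ∧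
    (∀ a₀ : IndexA, ¬ ∃ b : ℕ →ᵇ ℝ, ∀ a : IndexA, a₀ ≤ a → |xNet a| ≤ b) ∧
    ¬ ∃ l : ℕ →ᵇ ℝ, OrderConvNet xNet l := by
  refine ⟨fun k => orderConvNet_of_eventually_eq ?_, not_exists_xNet_tail_abs_le, ?_⟩
  · exact ⟨⟨(k + 1, k + 1), k.succ_pos, le_rfl⟩, fun a ha => projBand_xNet_eq_zero ha.1⟩
  · rintro ⟨l, hl⟩
    obtain ⟨a₀, b, hb⟩ := hl.exists_tail_abs_le
    exact not_exists_xNet_tail_abs_le a₀ ⟨b, hb⟩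
end

section
/- Let E be a Dedekind complete vector lattice with weak order unit e which is σ-laterally complete, i.e. every countable family of pairwise disjoint positive elements of E has a supremum in E. Let (x_n)_{n≥1} be an increasing sequence in E⁺. Then sup_n x_n exists in E if and only if inf_{k∈ℕ} sup_n P_{(x_n − ke)^+} e = 0 (each supremum over n exists in E since all terms lie in [0, e]). -/
def SigmaLaterallyComplete (E : Type*) [Lattice E] [AddCommGroup E] : Prop :=
  ∀ x : ℕ → E, (∀ n, 0 ≤ x n) → (∀ m n, m ≠ n → x m ⊓ x n = 0) →
    ∃ s, IsLUB (Set.range x) s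

open Set

lemma IsLUB.le_of_forall_le {ι α : Type*} [Preorder α] {f g : ι → α} {a b : α}
    (hf : IsLUB (range f) a) (hg : IsLUB (range g) b) (h : ∀ i, f i ≤ g i) : a ≤ b :=
  hf.2 <| forall_mem_range.2 fun i => (h i).trans (hg.1 (mem_range_self i))

lemma inf_eq_zero_of_le_of_le {α : Type*} [Lattice α] [Zero α] {a b q r : α} (hq : 0 ≤ q)
    (hr : 0 ≤ r) (hqa : q ≤ a) (hrb : r ≤ b) (hab : a ⊓ b = 0) : q ⊓ r = 0 :=
  le_antisymm (hab ▸ inf_le_inf hqa hrb) (le_inf hq hr)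

lemma nsmul_le_of_isLUB {E : Type*} [AddCommMonoid E] [Preorder E] [Module ℝ E]
    [PosSMulMono ℝ E] {ι : Type*} [Nonempty ι] {f : ι → E}
    {p s : E} (hf : IsLUB (range f) p) {k : ℕ} (h : ∀ i, k • f i ≤ s) : k • p ≤ s := by
  rcases k.eq_zero_or_pos with rfl | hk
  · obtain ⟨i⟩ := ‹Nonempty ι›
    simpa using h i
  have hk' : (k : ℝ) ≠ 0 := by positivity
  have hcast : ∀ a : E, (k : ℝ) • a = k • a := Nat.cast_smul_eq_nsmul ℝ k
  have hps : p ≤ (k : ℝ)⁻¹ • s := hf.2 <| forall_mem_range.2 fun i => by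
    have := smul_le_smul_of_nonneg_left ((hcast (f i)).trans_le (h i))
      (inv_nonneg.mpr (Nat.cast_nonneg (α := ℝ) k))
    rwa [smul_smul, inv_mul_cancel₀ hk', one_smul] at this
  have := smul_le_smul_of_nonneg_left hps (Nat.cast_nonneg (α := ℝ) k)
  rwa [smul_smul, mul_inv_cancel₀ hk', one_smul, hcast] at this

section LatticeOrderedGroup

variable {E : Type*} [Lattice E] [AddCommGroup E]

/-- Components of `e` are the images `P e` of `e` under band projections `P`. -/
def IsComponent (e p : E) : Prop :=
  p ⊓ (e - p) = 0

lemma IsComponent.nonneg {e p : E} (hp : IsComponent e p) : 0 ≤ p :=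
  hp ▸ inf_le_left

variable [AddLeftMono E]

lemma add_inf_le_inf_add_inf {a b c : E} (ha : 0 ≤ a) (hb : 0 ≤ b) (hc : 0 ≤ c) :
    (a + b) ⊓ c ≤ a ⊓ c + b ⊓ c := by
  have hle_add : (a + b) ⊓ c ≤ a ⊓ c + b :=
    calc (a + b) ⊓ c ≤ (a + b) ⊓ (c + b) := inf_le_inf_left _ (le_add_of_nonneg_right hb)
      _ = a ⊓ c + b := (inf_add _ _ _).symm
  have hle_c : (a + b) ⊓ c - a ⊓ c ≤ c := (sub_le_self _ (le_inf ha hc)).trans inf_le_right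
  exact sub_le_iff_le_add'.mp (le_inf (sub_le_iff_le_add'.mpr hle_add) hle_c)

lemma add_inf_eq_zero {a b c : E} (ha : 0 ≤ a) (hb : 0 ≤ b) (hc : 0 ≤ c)
    (hac : a ⊓ c = 0) (hbc : b ⊓ c = 0) : (a + b) ⊓ c = 0 :=
  le_antisymm (by simpa [hac, hbc] using add_inf_le_inf_add_inf ha hb hc)
    (le_inf (add_nonneg ha hb) hc)

lemma nsmul_inf_eq_zero {a b : E} (ha : 0 ≤ a) (hb : 0 ≤ b) (hab : a ⊓ b = 0) (n : ℕ) :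
    (n • a) ⊓ b = 0 := by
  induction n with
  | zero => simpa using inf_eq_left.mpr hb
  | succ n ih => rw [succ_nsmul]; exact add_inf_eq_zero (nsmul_nonneg ha n) ha hb ih hab

lemma le_of_le_add_of_inf_eq_zero {a q r : E} (ha : 0 ≤ a) (hqr : q ⊓ r = 0)
    (h : q ≤ a + r) : q ≤ a :=
  sub_nonpos.mp <| hqr ▸ le_inf (sub_le_self q ha) (sub_le_iff_le_add'.mpr h)

lemma inf_nsmul_posPart_sub_le {a b : E} (ha : 0 ≤ a) (hb : 0 ≤ b) (n : ℕ) :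
    a ⊓ n • (b - a)⁺ ≤ b := by
  have hdisj : (a ⊓ n • (b - a)⁺) ⊓ (b - a)⁻ = 0 :=
    inf_eq_zero_of_le_of_le (le_inf ha (nsmul_nonneg (posPart_nonneg _) n)) (negPart_nonneg _)
      inf_le_right le_rfl
      (nsmul_inf_eq_zero (posPart_nonneg _) (negPart_nonneg _) (posPart_inf_negPart_eq_zero _) n)
  refine le_of_le_add_of_inf_eq_zero hb hdisj (inf_le_left.trans ?_)
  have := posPart_sub_negPart (b - a)
  calc a = b - (b - a)⁺ + (b - a)⁻ := by rw [sub_add, this, sub_sub_cancel]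
    _ ≤ b + (b - a)⁻ := add_le_add_left (sub_le_self _ (posPart_nonneg _)) _

lemma IsLUB.inf_left {ι : Type*} {y : ι → E} {s : E} (h : IsLUB (range y) s) (r : E) :
    IsLUB (range fun i => r ⊓ y i) (r ⊓ s) := by
  refine ⟨forall_mem_range.2 fun i => inf_le_inf_left r (h.1 (mem_range_self i)), fun u hu => ?_⟩
  -- `r ⊓ y = r + y - r ⊔ y`, so `r ⊓ y i ≤ u` says `y i ≤ u + r ⊔ y i - r ≤ u + r ⊔ s - r`.
  have hys : s ≤ u + (r ⊔ s) - r := h.2 <| forall_mem_range.2 fun i => by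
    have hi : r + y i - (r ⊔ y i) ≤ u := by
      rw [← inf_add_sup r (y i), add_sub_cancel_right]; exact hu (mem_range_self i)
    have := add_le_add_right (sup_le_sup_left (h.1 (mem_range_self i)) r) u
    exact le_sub_iff_add_le'.mpr ((sub_le_iff_le_add.mp hi).trans this)
  rw [← add_sub_cancel_right (r ⊓ s) (r ⊔ s), inf_add_sup]
  exact sub_le_iff_le_add.mpr (by simpa [add_comm] using add_le_add_left hys r)

namespace IsComponent

variable {e p q : E}

lemma le (hp : IsComponent e p) : p ≤ e :=
  sub_nonneg.mp (hp ▸ inf_le_right)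

lemma sub (hp : IsComponent e p) (hq : IsComponent e q) (hqp : q ≤ p) :
    IsComponent e (p - q) := by
  have hpq : 0 ≤ p - q := sub_nonneg.mpr hqp
  have hep : 0 ≤ e - p := sub_nonneg.mpr hp.le
  rw [IsComponent, show e - (p - q) = (e - p) + q by abel, inf_comm]
  refine add_inf_eq_zero hep hq.nonneg hpq ?_ ?_
  · exact inf_eq_zero_of_le_of_le hep hpq le_rfl (sub_le_self _ hq.nonneg) (inf_comm p _ ▸ hp)
  · exact inf_eq_zero_of_le_of_le hq.nonneg hpq le_rfl (sub_le_sub_right hp.le q) hq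

lemma of_isLUB {ι : Type*} [Nonempty ι] {p : ι → E} {s : E} (hp : ∀ i, IsComponent e (p i))
    (h : IsLUB (range p) s) : IsComponent e s := by
  obtain ⟨i⟩ := ‹Nonempty ι›
  have hs : 0 ≤ s := (hp i).nonneg.trans (h.1 (mem_range_self i))
  have hse : s ≤ e := h.2 <| forall_mem_range.2 fun i => (hp i).le
  set t := s ⊓ (e - s)
  have ht : 0 ≤ t := le_inf hs (sub_nonneg.mpr hse)
  have htp : ∀ i, t ⊓ p i = 0 := fun i =>
    inf_eq_zero_of_le_of_le ht (hp i).nonneg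
      (inf_le_right.trans (sub_le_sub_left (h.1 (mem_range_self i)) e)) le_rfl
      (inf_comm (p i) _ ▸ hp i)
  have hts : t ⊓ s ≤ 0 := (h.inf_left t).2 <| forall_mem_range.2 fun i => (htp i).le
  exact le_antisymm (by rwa [inf_eq_left.mpr inf_le_left] at hts) ht

end IsComponent

lemma DedekindComplete.eq_zero_of_nsmul_le (hDed : DedekindComplete E) {d s : E} (hd : 0 ≤ d)
    (h : ∀ k : ℕ, k • d ≤ s) : d = 0 := by
  obtain ⟨t, ht⟩ := hDed (range fun k : ℕ => k • d) (range_nonempty _)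
    ⟨s, forall_mem_range.2 h⟩
  have htd : t ≤ t - d := ht.2 <| forall_mem_range.2 fun k =>
    le_sub_iff_add_le.mpr (succ_nsmul d k ▸ ht.1 (mem_range_self (k + 1)))
  exact le_antisymm (by simpa using htd) hd

lemma IsComponent.of_isLUB_inf_nsmul (hDed : DedekindComplete E) {e u p : E} (he : 0 ≤ e)
    (hu : 0 ≤ u) (h : IsLUB (range fun j : ℕ => e ⊓ j • u) p) : IsComponent e p := by
  have hp : 0 ≤ p := by simpa [inf_eq_right.mpr he] using h.1 (mem_range_self 0)
  have hpe : p ≤ e := h.2 <| forall_mem_range.2 fun j => inf_le_left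
  set r := p ⊓ (e - p)
  have hr : 0 ≤ r := le_inf hp (sub_nonneg.mpr hpe)
  have hre : ∀ j : ℕ, e ⊓ j • u ≤ e - r := fun j =>
    le_sub_comm.mp (inf_le_right.trans (sub_le_sub_left (h.1 (mem_range_self j)) e))
  -- `j • (r ⊓ u) ≤ e ⊓ j • u ≤ e - r` bounds all multiples of `r ⊓ u` by `e`
  have hru : r ⊓ u = 0 := hDed.eq_zero_of_nsmul_le (le_inf hr hu) fun j => by
    induction j with
    | zero => simpa using he
    | succ j ih =>
      have hj : j • (r ⊓ u) ≤ e - r ⊓ u :=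
        calc j • (r ⊓ u) ≤ e ⊓ j • u := le_inf ih (nsmul_le_nsmul_right inf_le_right j)
          _ ≤ e - r := hre j
          _ ≤ e - r ⊓ u := sub_le_sub_left inf_le_left e
      rw [succ_nsmul]
      exact le_sub_iff_add_le.mp hj
  have hrju : ∀ j : ℕ, r ⊓ j • u = 0 := fun j => by
    rw [inf_comm]; exact nsmul_inf_eq_zero hu hr (by rw [inf_comm, hru]) j
  have hrp : r ⊓ p ≤ 0 := (h.inf_left r).2 <| forall_mem_range.2 fun j =>
    (inf_le_inf_left r inf_le_right).trans (hrju j).le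
  exact le_antisymm (by rwa [inf_eq_left.mpr inf_le_left] at hrp) hr

lemma nsmul_le_of_isLUB_inf_nsmul_posPart [Module ℝ E] [PosSMulMono ℝ E] {e y p : E}
    (he : 0 ≤ e) (hy : 0 ≤ y) {k : ℕ} (h : IsLUB (range fun j : ℕ => e ⊓ j • (y - k • e)⁺) p) :
    k • p ≤ y :=
  nsmul_le_of_isLUB h fun j =>
    calc k • (e ⊓ j • (y - k • e)⁺) ≤ k • e ⊓ (k * j) • (y - k • e)⁺ :=
          le_inf (nsmul_le_nsmul_right inf_le_left k)
            (mul_nsmul' (y - k • e)⁺ k j ▸ nsmul_le_nsmul_right inf_le_right k)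
      _ ≤ y := inf_nsmul_posPart_sub_le (nsmul_nonneg he k) hy _

lemma isGLB_zero_of_nsmul_le (hDed : DedekindComplete E) {b : ℕ → E} {s : E}
    (hb : ∀ k, 0 ≤ b k) (h : ∀ k : ℕ, k • b k ≤ s) : IsGLB (range b) 0 := by
  refine ⟨forall_mem_range.2 hb, fun d hd => ?_⟩
  have hdb : ∀ k, d ⊔ 0 ≤ b k := fun k => sup_le (hd (mem_range_self k)) (hb k)
  have := hDed.eq_zero_of_nsmul_le le_sup_right fun k =>
    (nsmul_le_nsmul_right (hdb k) k).trans (h k)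
  exact le_sup_left.trans this.le

lemma exists_nsmul_sub_le (hLat : SigmaLaterallyComplete E) {e : E} {p : ℕ → E}
    (hp : ∀ k, IsComponent e (p k)) (hanti : Antitone p) :
    ∃ w, ∀ k : ℕ, k • (p k - p (k + 1)) ≤ w := by
  have hc : ∀ k, 0 ≤ p k - p (k + 1) := fun k => sub_nonneg.mpr (hanti k.le_succ)
  have hdisj : ∀ {m n : ℕ}, m < n → (m • (p m - p (m + 1))) ⊓ (n • (p n - p (n + 1))) = 0 := by
    intro m n hmn
    have hcc : (p m - p (m + 1)) ⊓ (p n - p (n + 1)) = 0 :=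
      inf_eq_zero_of_le_of_le (hc m) (hc n) (sub_le_sub_right (hp m).le _)
        ((sub_le_self _ (hp _).nonneg).trans (hanti hmn)) (inf_comm (p (m + 1)) _ ▸ hp (m + 1))
    rw [inf_comm]
    refine nsmul_inf_eq_zero (hc n) (nsmul_nonneg (hc m) m) ?_ n
    rw [inf_comm]
    exact nsmul_inf_eq_zero (hc m) (hc n) hcc m
  obtain ⟨w, hw⟩ := hLat (fun k => k • (p k - p (k + 1))) (fun k => nsmul_nonneg (hc k) k)
    fun m n hmn => hmn.lt_or_gt.elim hdisj fun h => inf_comm (α := E) _ _ ▸ hdisj h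
  exact ⟨w, fun k => hw.1 (mem_range_self k)⟩

/-- In the band of `c` we have `w ≥ k • e`, so there `y - (w + e) ≤ y - (k + 1) • e`. -/
lemma le_posPart_sub_nsmul_of_le_component {e c q w y : E} {k : ℕ} (hc : IsComponent e c)
    (hkc : k • c ≤ w) (hq : 0 ≤ q) (hqc : q ≤ c) (hqy : q ≤ (y - (w + e))⁺) :
    q ≤ (y - (k + 1) • e)⁺ := by
  have hec : 0 ≤ e - c := sub_nonneg.mpr hc.le
  have hqv : q ⊓ (y - (w + e))⁻ = 0 :=
    inf_eq_zero_of_le_of_le hq (negPart_nonneg _) hqy le_rfl (posPart_inf_negPart_eq_zero _)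
  have hqec : q ⊓ k • (e - c) = 0 := by
    rw [inf_comm]
    exact nsmul_inf_eq_zero hec hq
      (inf_eq_zero_of_le_of_le hec hq le_rfl hqc (inf_comm c _ ▸ hc)) k
  refine le_of_le_add_of_inf_eq_zero (posPart_nonneg _) (r := (y - (w + e))⁻ + k • (e - c))
    ?_ ?_
  · rw [inf_comm]
    exact add_inf_eq_zero (negPart_nonneg _) (nsmul_nonneg hec k) hq
      (inf_comm q _ ▸ hqv) (inf_comm q _ ▸ hqec)
  calc q ≤ (y - (w + e))⁺ := hqy
    _ = y - (w + e) + (y - (w + e))⁻ := eq_add_of_sub_eq (posPart_sub_negPart _)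
    _ ≤ y - (k • c + e) + (y - (w + e))⁻ := by gcongr
    _ = y - (k + 1) • e + ((y - (w + e))⁻ + k • (e - c)) := by rw [nsmul_sub, succ_nsmul]; abel
    _ ≤ (y - (k + 1) • e)⁺ + ((y - (w + e))⁻ + k • (e - c)) := by gcongr; exact le_posPart _

lemma le_add_of_isGLB_components {e : E} (he : 0 ≤ e)
    (he_unit : ∀ x : E, 0 ≤ x → x ⊓ e = 0 → x = 0) {p : ℕ → E} (hp : ∀ k, IsComponent e (p k))
    (hanti : Antitone p) (hglb : IsGLB (range p) 0) {w y : E} (hw : ∀ k : ℕ, k • (p k - p (k + 1)) ≤ w)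
    (hy : ∀ k : ℕ, e ⊓ (y - k • e)⁺ ≤ p k) : y ≤ w + e := by
  have hw0 : 0 ≤ w := by simpa using hw 0
  set z := (y - (w + e))⁺ ⊓ e
  have hz : 0 ≤ z := le_inf (posPart_nonneg _) he
  have hzp : ∀ k, z ≤ p k := by
    intro k
    induction k with
    | zero =>
      refine le_trans ?_ (hy 0)
      rw [zero_nsmul, sub_zero, inf_comm e]
      exact inf_le_inf_right e (posPart_mono (sub_le_self y (add_nonneg hw0 he)))
    | succ k ih =>
      set c := p k - p (k + 1)
      have hc : 0 ≤ c := sub_nonneg.mpr (hanti k.le_succ)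
      have hzc_pos : z ⊓ c ≤ (y - (k + 1) • e)⁺ :=
        le_posPart_sub_nsmul_of_le_component ((hp k).sub (hp (k + 1)) (hanti k.le_succ)) (hw k)
          (le_inf hz hc) inf_le_right (inf_le_left.trans inf_le_left)
      have hzc : z ⊓ c ≤ p (k + 1) :=
        (le_inf (inf_le_left.trans inf_le_right) hzc_pos).trans (hy (k + 1))
      have hcp : c ⊓ p (k + 1) = 0 :=
        inf_eq_zero_of_le_of_le hc (hp _).nonneg (sub_le_sub_right (hp k).le _) le_rfl
          (inf_comm (p (k + 1)) _ ▸ hp (k + 1))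
      have hzc0 : z ⊓ c = 0 := by
        simpa using inf_eq_zero_of_le_of_le (le_inf hz hc) (le_inf hz hc) inf_le_right hzc hcp
      exact le_of_le_add_of_inf_eq_zero (hp _).nonneg hzc0 (by simpa [c] using ih)
  have hz0 : z = 0 := le_antisymm (hglb.2 (forall_mem_range.2 hzp)) hz
  exact sub_nonpos.mp ((le_posPart _).trans (he_unit _ (posPart_nonneg _) hz0).le)

end LatticeOrderedGroup

theorem sup_exists_iff_inf_band_projections_zero_sequential_general
    {E : Type*} [Lattice E] [AddCommGroup E] [Module ℝ E]
    [CovariantClass E E (· + ·) (· ≤ ·)] [PosSMulMono ℝ E]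
    (hDed : DedekindComplete E) (hLat : SigmaLaterallyComplete E)
    (e : E) (he_pos : 0 ≤ e) (he_unit : ∀ x : E, 0 ≤ x → x ⊓ e = 0 → x = 0)
    (x : ℕ → E) (hx_pos : ∀ n, 0 ≤ x n)
    (π : ℕ → ℕ → E)
    (hπ : ∀ n k : ℕ,
      IsLUB (Set.range fun j : ℕ => e ⊓ (j • (x n - k • e)⁺)) (π n k))
    (b : ℕ → E)
    (hb : ∀ k : ℕ, IsLUB (Set.range fun n => π n k) (b k)) :
    (∃ s, IsLUB (Set.range x) s) ↔ IsGLB (Set.range b) 0 := by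
  have hb_comp : ∀ k, IsComponent e (b k) := fun k =>
    .of_isLUB (fun n => .of_isLUB_inf_nsmul hDed he_pos (posPart_nonneg _) (hπ n k)) (hb k)
  have hb_anti : Antitone b := antitone_nat_of_succ_le fun k =>
    (hb (k + 1)).le_of_forall_le (hb k) fun n => (hπ n (k + 1)).le_of_forall_le (hπ n k) fun j =>
      inf_le_inf_left e <| nsmul_le_nsmul_right
        (posPart_mono (sub_le_sub_left (nsmul_le_nsmul_left he_pos k.le_succ) _)) j
  constructor
  · rintro ⟨s, hs⟩
    refine isGLB_zero_of_nsmul_le hDed (s := s) (fun k => (hb_comp k).nonneg) fun k => ?_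
    exact nsmul_le_of_isLUB (hb k) fun n =>
      (nsmul_le_of_isLUB_inf_nsmul_posPart he_pos (hx_pos n) (hπ n k)).trans
        (hs.1 (mem_range_self n))
  · intro hglb
    obtain ⟨w, hw⟩ := exists_nsmul_sub_le hLat hb_comp hb_anti
    refine hDed _ (range_nonempty x) ⟨w + e, forall_mem_range.2 fun n => ?_⟩
    refine le_add_of_isGLB_components he_pos he_unit hb_comp hb_anti hglb hw fun k => ?_
    exact ((hπ n k).1 ⟨1, by simp⟩).trans ((hb k).1 (mem_range_self n))

/-- Theorem. Let `E` be a Dedekind complete, σ-laterally complete vector lattice with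
weak order unit `e`, and let `(x_n)_{n ≥ 1}` be an increasing sequence in `E⁺`.  For
`u ∈ E⁺`, `P_u` denotes the band projection onto the band generated by `u`, given by
`P_u z = sup_j (z ⊓ j u)`; here `π n k = P_{(x_n - k e)⁺} e` and
`b k = sup_n P_{(x_n - k e)⁺} e` (these suprema exist since all terms lie in `[0, e]`).
Then `sup_n x_n` exists in `E` if and only if `inf_{k ∈ ℕ} b k = 0`. -/
theorem sup_exists_iff_inf_band_projections_zero_sequential
    {E : Type*} [Lattice E] [AddCommGroup E] [Module ℝ E]
    [CovariantClass E E (· + ·) (· ≤ ·)] [PosSMulMono ℝ E]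
    (hDed : DedekindComplete E) (hLat : SigmaLaterallyComplete E)
    (e : E) (he_pos : 0 ≤ e) (he_unit : ∀ x : E, 0 ≤ x → x ⊓ e = 0 → x = 0)
    (x : ℕ → E) (hx_pos : ∀ n, 0 ≤ x n) (hx_mono : Monotone x)
    (π : ℕ → ℕ → E)
    (hπ : ∀ n k : ℕ,
      IsLUB (Set.range fun j : ℕ => e ⊓ (j • (x n - k • e)⁺)) (π n k))
    (b : ℕ → E)
    (hb : ∀ k : ℕ, IsLUB (Set.range fun n => π n k) (b k)) :
    (∃ s, IsLUB (Set.range x) s) ↔ IsGLB (Set.range b) 0 :=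
  sup_exists_iff_inf_band_projections_zero_sequential_general hDed hLat e he_pos he_unit x hx_pos π
    hπ b hb
end

section
/- Let E be a universally complete f-algebra whose multiplicative identity e is a weak order unit. Let (x_n)_{n≥1} be a sequence in E⁺ and set R_n = Σ_{i=1}^{n} x_i. Then for each n the element e + R_n has a multiplicative inverse (e + R_n)^{−1} in E with 0 ≤ (e + R_n)^{−1} ≤ e, the series Σ_{n=1}^{∞} x_n · (e + R_n)^{−2} converges in order in E, and Σ_{n=1}^{∞} x_n · (e + R_n)^{−2} ≤ e. -/
/-- A sequence `(s_n)` in a vector lattice order converges to `l` if there is a sequence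
`(y_m)` decreasing to `0` such that for every `m` there is `N` with `|s_n - l| ≤ y_m`
for all `n ≥ N`. -/
def OrderConvSeq {E : Type*} [Lattice E] [AddCommGroup E] (s : ℕ → E) (l : E) : Prop :=
  ∃ y : ℕ → E, Antitone y ∧ IsGLB (Set.range y) 0 ∧
    ∀ m, ∃ N, ∀ n, N ≤ n → |s n - l| ≤ y m

/-! To invert `1 ≤ a ≤ m • 1`, take `e = (1 / m) • 1`, which is positive because `e = m • e²` and
squares are positive in an `f`-algebra. Then `b = e * a` satisfies `0 ≤ b ≤ 1 ≤ m • b`, and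
`b⁻¹ = ∑ₖ (1 - b) ^ k`: the partial sums are bounded by `m • 1`, and `(1 - b) ^ M` decreases to `0`
since `M • (1 - b) ^ M ≤ m • 1` and Dedekind completeness makes `E` Archimedean. A general
`x ≥ 1` is inverted as the infimum of the inverses of its truncations `x ⊓ (N + 1) • 1`; the
weak order unit is what makes these truncations exhaust `x`.

With `v n = (1 + R n)⁻¹` one has `v (n - 1) - v n = v (n - 1) * v n * x n`, hence
`x n * v n ^ 2 ≤ v (n - 1) - v n`: the partial sums increase and telescope to at most
`1 - v N ≤ 1`, so they order converge to their supremum.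
-/

open Set

section LatticeOrderedGroup

variable {E : Type*} [Lattice E] [AddCommGroup E] [AddLeftMono E]

theorem le_zero_of_forall_nsmul_le (hDed : DedekindComplete E) {a b : E}
    (h : ∀ n : ℕ, n • a ≤ b) : a ≤ 0 := by
  obtain ⟨s, hs⟩ := hDed (range fun n : ℕ => n • a) (range_nonempty _)
    ⟨b, forall_mem_range.2 h⟩
  have : s ≤ s - a := hs.2 <| forall_mem_range.2 fun n =>
    le_sub_iff_add_le.2 (succ_nsmul a n ▸ hs.1 (mem_range_self (n + 1)))
  exact (le_sub_self_iff s).1 this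

theorem isGLB_zero_of_forall_nsmul_le (hDed : DedekindComplete E) {z : ℕ → E} {c : E}
    (hz : ∀ n, 0 ≤ z n) (h : ∀ n, n • z n ≤ c) : IsGLB (range z) 0 := by
  refine ⟨forall_mem_range.2 hz, fun d hd => ?_⟩
  have hd' : ∀ n, d ⊔ 0 ≤ z n := fun n => sup_le (hd (mem_range_self n)) (hz n)
  exact le_sup_left.trans <| le_zero_of_forall_nsmul_le hDed fun n =>
    (nsmul_le_nsmul_right (hd' n) n).trans (h n)

theorem IsLUB.isGLB_range_sub {s : ℕ → E} {l : E} (h : IsLUB (range s) l) :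
    IsGLB (range fun n => l - s n) 0 := by
  refine ⟨forall_mem_range.2 fun n => sub_nonneg.2 (h.1 (mem_range_self n)), fun d hd => ?_⟩
  have : l ≤ l - d := h.2 <| forall_mem_range.2 fun n => le_sub_comm.1 (hd (mem_range_self n))
  exact (le_sub_self_iff l).1 this

theorem IsGLB.isGLB_range_sub {s : ℕ → E} {l : E} (h : IsGLB (range s) l) :
    IsGLB (range fun n => s n - l) 0 := by
  refine ⟨forall_mem_range.2 fun n => sub_nonneg.2 (h.1 (mem_range_self n)), fun d hd => ?_⟩
  have : d + l ≤ l := h.2 <| forall_mem_range.2 fun n =>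
    le_sub_iff_add_le.1 (hd (mem_range_self n))
  exact add_le_iff_nonpos_left.1 this

theorem isGLB_range_add {s t : ℕ → E} (hs : Antitone s) (ht : Antitone t)
    (hs0 : IsGLB (range s) 0) (ht0 : IsGLB (range t) 0) :
    IsGLB (range fun n => s n + t n) 0 := by
  refine ⟨forall_mem_range.2 fun n =>
    add_nonneg (hs0.1 (mem_range_self n)) (ht0.1 (mem_range_self n)), fun d hd => ?_⟩
  -- `d - s m` bounds `t` from below because `s + t` is evaluated at `max m n`
  refine hs0.2 <| forall_mem_range.2 fun m => sub_nonpos.1 <| ht0.2 <|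
    forall_mem_range.2 fun n => ?_
  have hmn : d ≤ s (max m n) + t (max m n) := hd (mem_range_self (max m n))
  exact sub_le_iff_le_add'.2
    (hmn.trans (add_le_add (hs (le_max_left m n)) (ht (le_max_right m n))))

theorem isGLB_range_nsmul {t : ℕ → E} (ht : Antitone t) (ht0 : IsGLB (range t) 0) (k : ℕ) :
    IsGLB (range fun n => k • t n) 0 := by
  induction k with
  | zero => simp [isGLB_singleton]
  | succ k ih =>
    simpa only [succ_nsmul] using
      isGLB_range_add (fun _ _ h => nsmul_le_nsmul_right (ht h) k) ht ih ht0

theorem orderConvSeq_of_monotone_of_isLUB {s : ℕ → E} {l : E} (hs : Monotone s)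
    (hl : IsLUB (range s) l) : OrderConvSeq s l := by
  refine ⟨fun m => l - s m, fun _ _ h => sub_le_sub_left (hs h) l, hl.isGLB_range_sub,
    fun m => ⟨m, fun n hn => ?_⟩⟩
  rw [abs_sub_comm, abs_of_nonneg (sub_nonneg.2 (hl.1 (mem_range_self n)))]
  exact sub_le_sub_left (hs hn) l

end LatticeOrderedGroup

theorem sub_eq_mul_mul_sub_of_mul_eq_one {E : Type*} [CommRing E] {a b v w : E}
    (hav : a * v = 1) (hbw : b * w = 1) : v - w = v * w * (b - a) := by
  linear_combination w * hav - v * hbw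

theorem mul_eq_zero_of_inf_eq_zero {E : Type*} [Lattice E] [CommRing E]
    (hf_alg : ∀ x y z : E, x ⊓ y = 0 → 0 ≤ z → (x * z) ⊓ y = 0)
    {a b : E} (ha : 0 ≤ a) (hb : 0 ≤ b) (hab : a ⊓ b = 0) : a * b = 0 := by
  have h := hf_alg b (a * b) a (by rw [inf_comm]; exact hf_alg a b b hab hb) ha
  rwa [mul_comm, inf_idem] at h

section LatticeOrderedRing

variable {E : Type*} [Lattice E] [CommRing E] [AddLeftMono E]

theorem posMulMono_of_mul_nonneg (hmul_pos : ∀ x y : E, 0 ≤ x → 0 ≤ y → 0 ≤ x * y) :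
    PosMulMono E :=
  ⟨fun a ha b c hbc => by simpa [mul_sub] using hmul_pos a (c - b) ha (sub_nonneg.2 hbc)⟩

theorem le_one_of_one_le_of_mul_eq_one (hmul_pos : ∀ x y : E, 0 ≤ x → 0 ≤ y → 0 ≤ x * y)
    {a v : E} (ha : 1 ≤ a) (hv : 0 ≤ v) (hav : a * v = 1) : v ≤ 1 := by
  have := posMulMono_of_mul_nonneg hmul_pos
  have := PosMulMono.toMulPosMono (α := E)
  simpa [hav] using le_mul_of_one_le_left hv ha

theorem le_of_le_of_mul_eq_one (hmul_pos : ∀ x y : E, 0 ≤ x → 0 ≤ y → 0 ≤ x * y)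
    {a b v w : E} (hab : a ≤ b) (hav : a * v = 1) (hbw : b * w = 1) (hv : 0 ≤ v)
    (hw : 0 ≤ w) : w ≤ v := by
  rw [← sub_nonneg, sub_eq_mul_mul_sub_of_mul_eq_one hav hbw]
  exact hmul_pos _ _ (hmul_pos _ _ hv hw) (sub_nonneg.2 hab)

theorem sub_mul_sq_le_sub_of_mul_eq_one (hmul_pos : ∀ x y : E, 0 ≤ x → 0 ≤ y → 0 ≤ x * y)
    {a b v w : E} (hab : a ≤ b) (hav : a * v = 1) (hbw : b * w = 1) (hv : 0 ≤ v)
    (hw : 0 ≤ w) : (b - a) * w ^ 2 ≤ v - w := by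
  have := posMulMono_of_mul_nonneg hmul_pos
  calc (b - a) * w ^ 2 = ((b - a) * w) * w := by ring
    _ ≤ ((b - a) * w) * v :=
      mul_le_mul_of_nonneg_left (le_of_le_of_mul_eq_one hmul_pos hab hav hbw hv hw)
        (hmul_pos _ _ (sub_nonneg.2 hab) hw)
    _ = v - w := by rw [sub_eq_mul_mul_sub_of_mul_eq_one hav hbw]; ring

theorem mul_self_nonneg_of_fAlgebra (hmul_pos : ∀ x y : E, 0 ≤ x → 0 ≤ y → 0 ≤ x * y)
    (hf_alg : ∀ x y z : E, x ⊓ y = 0 → 0 ≤ z → (x * z) ⊓ y = 0) (a : E) :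
    0 ≤ a * a := by
  have h := mul_eq_zero_of_inf_eq_zero hf_alg (posPart_nonneg a) (negPart_nonneg a)
    (posPart_inf_negPart_eq_zero a)
  have ha : a * a = a⁺ * a⁺ + a⁻ * a⁻ := by
    conv_lhs => rw [← posPart_sub_negPart a]
    linear_combination (-2 : E) * h
  rw [ha]
  exact add_nonneg (hmul_pos _ _ (posPart_nonneg a) (posPart_nonneg a))
    (hmul_pos _ _ (negPart_nonneg a) (negPart_nonneg a))

theorem exists_nonneg_nsmul_eq_one [Module ℝ E]
    (hmul_pos : ∀ x y : E, 0 ≤ x → 0 ≤ y → 0 ≤ x * y)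
    (hf_alg : ∀ x y z : E, x ⊓ y = 0 → 0 ≤ z → (x * z) ⊓ y = 0) {m : ℕ} (hm : m ≠ 0) :
    ∃ e : E, 0 ≤ e ∧ m • e = 1 := by
  set e : E := (m : ℝ)⁻¹ • 1
  have he : m • e = 1 := by
    rw [← Nat.cast_smul_eq_nsmul ℝ, smul_smul, mul_inv_cancel₀ (Nat.cast_ne_zero.2 hm),
      one_smul]
  refine ⟨e, ?_, he⟩
  calc (0 : E) ≤ m • (e * e) := nsmul_nonneg (mul_self_nonneg_of_fAlgebra hmul_pos hf_alg e) m
    _ = e := by rw [← smul_mul_assoc, he, one_mul]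

theorem isGLB_range_sub_inf_nsmul_one (hDed : DedekindComplete E) (h1_pos : (0 : E) ≤ 1)
    (h1_unit : ∀ x : E, 0 ≤ x → x ⊓ 1 = 0 → x = 0) {z : E} (hz : 0 ≤ z) :
    IsGLB (range fun n : ℕ => z - z ⊓ n • (1 : E)) 0 := by
  refine ⟨forall_mem_range.2 fun n => sub_nonneg.2 inf_le_left, fun d hd => ?_⟩
  set h := (d ⊔ 0) ⊓ 1
  have hdn : ∀ n : ℕ, h ≤ z - z ⊓ n • 1 := fun n =>
    inf_le_left.trans (sup_le (hd (mem_range_self n)) (sub_nonneg.2 inf_le_left))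
  have hnh : ∀ n : ℕ, n • h ≤ z ⊓ n • 1 := by
    intro n
    induction n with
    | zero => simp [hz]
    | succ n ih =>
      rw [succ_nsmul, succ_nsmul]
      refine le_inf ?_ (add_le_add (ih.trans inf_le_right) inf_le_right)
      calc n • h + h ≤ z ⊓ n • 1 + (z - z ⊓ n • 1) := add_le_add ih (hdn n)
        _ = z := add_sub_cancel _ _
  have h0 : h = 0 := le_antisymm
    (le_zero_of_forall_nsmul_le hDed fun n => (hnh n).trans inf_le_left)
    (le_inf le_sup_right h1_pos)
  exact le_sup_left.trans (h1_unit _ le_sup_right h0).le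

theorem isGLB_range_mul (hmul_pos : ∀ x y : E, 0 ≤ x → 0 ≤ y → 0 ≤ x * y)
    (hDed : DedekindComplete E) (h1_pos : (0 : E) ≤ 1)
    (h1_unit : ∀ x : E, 0 ≤ x → x ⊓ 1 = 0 → x = 0) {a : E} (ha : 0 ≤ a) {t : ℕ → E}
    (ht : Antitone t) (ht0 : IsGLB (range t) 0) (ht1 : ∀ n, t n ≤ 1) :
    IsGLB (range fun n => a * t n) 0 := by
  have := posMulMono_of_mul_nonneg hmul_pos
  have := PosMulMono.toMulPosMono (α := E)
  have ht_nonneg : ∀ n, 0 ≤ t n := fun n => ht0.1 (mem_range_self n)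
  refine ⟨forall_mem_range.2 fun n => mul_nonneg ha (ht_nonneg n), fun d hd => ?_⟩
  refine (isGLB_range_sub_inf_nsmul_one hDed h1_pos h1_unit ha).2 <|
    forall_mem_range.2 fun M => ?_
  have hsplit : ∀ n, a * t n ≤ (a - a ⊓ M • 1) + M • t n := fun n => calc
    a * t n = (a - a ⊓ M • 1) * t n + (a ⊓ M • 1) * t n := by ring
    _ ≤ (a - a ⊓ M • 1) * 1 + (M • 1) * t n :=
      add_le_add (mul_le_mul_of_nonneg_left (ht1 n) (sub_nonneg.2 inf_le_left))
        (mul_le_mul_of_nonneg_right inf_le_right (ht_nonneg n))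
    _ = (a - a ⊓ M • 1) + M • t n := by rw [mul_one, smul_mul_assoc, one_mul]
  exact sub_nonpos.1 <| (isGLB_range_nsmul ht ht0 M).2 <| forall_mem_range.2 fun n =>
    sub_le_iff_le_add'.2 ((hd (mem_range_self n)).trans (hsplit n))

theorem isGLB_range_one_sub_pow (hmul_pos : ∀ x y : E, 0 ≤ x → 0 ≤ y → 0 ≤ x * y)
    (hDed : DedekindComplete E) {b : E} (hb0 : 0 ≤ b) (hb1 : b ≤ 1) {m : ℕ}
    (hbm : 1 ≤ m • b) : IsGLB (range fun k => (1 - b) ^ k) 0 := by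
  have := posMulMono_of_mul_nonneg hmul_pos
  have := PosMulMono.toMulPosMono (α := E)
  have : ZeroLEOneClass E := ⟨hb0.trans hb1⟩
  set z : ℕ → E := fun k => (1 - b) ^ k with hz
  have hz0 : ∀ k, 0 ≤ z k := fun k => pow_nonneg (sub_nonneg.2 hb1) k
  have hz_sub : ∀ k, z k - z (k + 1) = b * z k := fun k => by simp only [hz]; ring
  have hz_anti : Antitone z := antitone_nat_of_succ_le fun k =>
    sub_nonneg.1 (hz_sub k ▸ mul_nonneg hb0 (hz0 k))
  have hz_le : ∀ k, z k ≤ m • (z k - z (k + 1)) := fun k => by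
    rw [hz_sub, ← smul_mul_assoc]
    exact le_mul_of_one_le_left (hz0 k) hbm
  refine isGLB_zero_of_forall_nsmul_le hDed hz0 (c := m • 1) fun M => ?_
  calc M • z M ≤ ∑ k ∈ Finset.range M, z k := by
        simpa using Finset.card_nsmul_le_sum (Finset.range M) z (z M)
          fun k hk => hz_anti (Finset.mem_range.1 hk).le
    _ ≤ ∑ k ∈ Finset.range M, m • (z k - z (k + 1)) := Finset.sum_le_sum fun k _ => hz_le k
    _ = m • (1 - z M) := by rw [← Finset.smul_sum, Finset.sum_range_sub']; simp [hz]
    _ ≤ m • 1 := nsmul_le_nsmul_right (sub_le_self 1 (hz0 M)) m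

theorem exists_mul_eq_one_of_one_le_nsmul (hmul_pos : ∀ x y : E, 0 ≤ x → 0 ≤ y → 0 ≤ x * y)
    (hDed : DedekindComplete E) {b : E} (hb0 : 0 ≤ b) (hb1 : b ≤ 1) {m : ℕ}
    (hbm : 1 ≤ m • b) : ∃ w : E, b * w = 1 ∧ 0 ≤ w := by
  have := posMulMono_of_mul_nonneg hmul_pos
  have := PosMulMono.toMulPosMono (α := E)
  have : ZeroLEOneClass E := ⟨hb0.trans hb1⟩
  set P : ℕ → E := fun K => ∑ k ∈ Finset.range K, (1 - b) ^ k with hP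
  have hP0 : ∀ K, 0 ≤ P K := fun K =>
    Finset.sum_nonneg fun k _ => pow_nonneg (sub_nonneg.2 hb1) k
  have hbP : ∀ K, b * P K = 1 - (1 - b) ^ K := fun K => by
    have hstep : ∀ k, b * (1 - b) ^ k = (1 - b) ^ k - (1 - b) ^ (k + 1) := fun k => by ring
    simp only [hP, Finset.mul_sum, hstep, Finset.sum_range_sub', pow_zero]
  have hP_le : ∀ K, P K ≤ m • 1 := fun K => calc
    P K ≤ (m • b) * P K := le_mul_of_one_le_left (hP0 K) hbm
    _ = m • (1 - (1 - b) ^ K) := by rw [smul_mul_assoc, hbP]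
    _ ≤ m • 1 := nsmul_le_nsmul_right (sub_le_self 1 (pow_nonneg (sub_nonneg.2 hb1) K)) m
  obtain ⟨w, hw⟩ := hDed (range P) (range_nonempty P) ⟨m • 1, forall_mem_range.2 hP_le⟩
  refine ⟨w, le_antisymm ?_ ?_, (hP0 0).trans (hw.1 (mem_range_self 0))⟩
  · refine sub_nonpos.1 <| hw.isGLB_range_sub.2 <| forall_mem_range.2 fun K => ?_
    calc b * w - 1 = b * (w - P K) - (1 - b) ^ K := by rw [mul_sub, hbP]; ring
      _ ≤ b * (w - P K) := sub_le_self _ (pow_nonneg (sub_nonneg.2 hb1) K)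
      _ ≤ w - P K := mul_le_of_le_one_left (sub_nonneg.2 (hw.1 (mem_range_self K))) hb1
  · refine sub_nonpos.1 <| (isGLB_range_one_sub_pow hmul_pos hDed hb0 hb1 hbm).2 <|
      forall_mem_range.2 fun K => ?_
    have := mul_le_mul_of_nonneg_left (hw.1 (mem_range_self K)) hb0
    rw [hbP] at this
    exact sub_le_comm.1 this

theorem exists_mul_eq_one_of_one_le_of_le_nsmul [Module ℝ E]
    (hmul_pos : ∀ x y : E, 0 ≤ x → 0 ≤ y → 0 ≤ x * y)
    (hf_alg : ∀ x y z : E, x ⊓ y = 0 → 0 ≤ z → (x * z) ⊓ y = 0)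
    (hDed : DedekindComplete E) (h1_pos : (0 : E) ≤ 1) {a : E} (ha : 1 ≤ a) {m : ℕ}
    (hm : m ≠ 0) (ham : a ≤ m • 1) : ∃ v : E, a * v = 1 ∧ 0 ≤ v := by
  have := posMulMono_of_mul_nonneg hmul_pos
  obtain ⟨e, he0, he⟩ := exists_nonneg_nsmul_eq_one hmul_pos hf_alg hm
  have hea : m • (e * a) = a := by rw [← smul_mul_assoc, he, one_mul]
  have hea1 : e * a ≤ 1 := calc
    e * a ≤ e * (m • 1) := mul_le_mul_of_nonneg_left ham he0
    _ = 1 := by rw [mul_smul_comm, mul_one, he]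
  obtain ⟨w, hw, hw0⟩ := exists_mul_eq_one_of_one_le_nsmul hmul_pos hDed
    (mul_nonneg he0 (h1_pos.trans ha)) hea1 (hea.symm ▸ ha)
  exact ⟨e * w, by rw [← hw]; ring, mul_nonneg he0 hw0⟩

theorem exists_mul_eq_one_of_one_le [Module ℝ E]
    (hmul_pos : ∀ x y : E, 0 ≤ x → 0 ≤ y → 0 ≤ x * y)
    (hf_alg : ∀ x y z : E, x ⊓ y = 0 → 0 ≤ z → (x * z) ⊓ y = 0)
    (hDed : DedekindComplete E) (h1_pos : (0 : E) ≤ 1)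
    (h1_unit : ∀ x : E, 0 ≤ x → x ⊓ 1 = 0 → x = 0) {x : E} (hx : 1 ≤ x) :
    ∃ v : E, x * v = 1 ∧ 0 ≤ v ∧ v ≤ 1 := by
  have := posMulMono_of_mul_nonneg hmul_pos
  have := PosMulMono.toMulPosMono (α := E)
  have hx0 : 0 ≤ x := h1_pos.trans hx
  have htrunc_mono : Monotone fun N : ℕ => x ⊓ N • 1 := fun _ _ h =>
    inf_le_inf_left x (nsmul_le_nsmul_left h1_pos h)
  set a : ℕ → E := fun N => x ⊓ (N + 1) • 1
  have ha1 : ∀ N, 1 ≤ a N := fun N =>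
    le_inf hx (by simpa using nsmul_le_nsmul_left h1_pos (Nat.succ_le_succ N.zero_le))
  choose v hav hv0 using fun N => exists_mul_eq_one_of_one_le_of_le_nsmul hmul_pos hf_alg
    hDed h1_pos (ha1 N) N.succ_ne_zero inf_le_right
  have hv1 : ∀ N, v N ≤ 1 := fun N =>
    le_one_of_one_le_of_mul_eq_one hmul_pos (ha1 N) (hv0 N) (hav N)
  have hv_anti : Antitone v := antitone_nat_of_succ_le fun N =>
    le_of_le_of_mul_eq_one hmul_pos (htrunc_mono N.succ.le_succ) (hav N) (hav (N + 1)) (hv0 N)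
      (hv0 (N + 1))
  obtain ⟨w, hw⟩ := hDed (lowerBounds (range v)) ⟨0, forall_mem_range.2 hv0⟩
    ⟨v 0, fun b hb => hb (mem_range_self 0)⟩
  rw [isLUB_lowerBounds] at hw
  have hw0 : 0 ≤ w := hw.2 (forall_mem_range.2 hv0)
  refine ⟨w, le_antisymm ?_ ?_, hw0, (hw.1 (mem_range_self 0)).trans (hv1 0)⟩
  · refine sub_nonpos.1 <| (isGLB_range_sub_inf_nsmul_one hDed h1_pos h1_unit hx0).2 <|
      forall_mem_range.2 fun N => ?_
    calc x * w - 1 ≤ x * v N - a N * v N := by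
          rw [hav]; exact sub_le_sub_right (mul_le_mul_of_nonneg_left (hw.1 ⟨N, rfl⟩) hx0) 1
      _ = (x - a N) * v N := by ring
      _ ≤ x - a N := mul_le_of_le_one_right (sub_nonneg.2 inf_le_left) (hv1 N)
      _ ≤ x - x ⊓ N • 1 := sub_le_sub_left (htrunc_mono N.le_succ) x
  · refine sub_nonpos.1 <| (isGLB_range_mul hmul_pos hDed h1_pos h1_unit hx0
      (fun _ _ h => sub_le_sub_right (hv_anti h) w) hw.isGLB_range_sub
      fun N => (sub_le_self _ hw0).trans (hv1 N)).2 <| forall_mem_range.2 fun N => ?_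
    calc 1 - x * w = a N * v N - x * w := by rw [hav]
      _ ≤ x * v N - x * w := sub_le_sub_right (mul_le_mul_of_nonneg_right inf_le_left (hv0 N)) _
      _ = x * (v N - w) := by ring

theorem sum_Icc_mul_sq_le_sub (hmul_pos : ∀ x y : E, 0 ≤ x → 0 ≤ y → 0 ≤ x * y)
    {x v : ℕ → E} (hx : ∀ n, 0 ≤ x n) (hv0 : ∀ n, 0 ≤ v n)
    (hv : ∀ n, (1 + ∑ i ∈ Finset.Icc 1 n, x i) * v n = 1) (N : ℕ) :
    ∑ n ∈ Finset.Icc 1 N, x n * v n ^ 2 ≤ v 0 - v N := by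
  induction N with
  | zero => simp
  | succ N ih =>
    have hstep : (1 + ∑ i ∈ Finset.Icc 1 (N + 1), x i) - (1 + ∑ i ∈ Finset.Icc 1 N, x i) =
        x (N + 1) := by
      rw [Finset.sum_Icc_succ_top (by omega)]; ring
    have hterm := sub_mul_sq_le_sub_of_mul_eq_one hmul_pos
      (by rw [← sub_nonneg, hstep]; exact hx _) (hv N) (hv (N + 1)) (hv0 N) (hv0 (N + 1))
    rw [hstep] at hterm
    rw [Finset.sum_Icc_succ_top (by omega)]
    calc _ ≤ (v 0 - v N) + (v N - v (N + 1)) := add_le_add ih hterm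
      _ = v 0 - v (N + 1) := sub_add_sub_cancel _ _ _

end LatticeOrderedRing

theorem falgebra_sum_xn_inv_sq_le_one_general
    {E : Type*} [Lattice E] [CommRing E] [Module ℝ E]
    [CovariantClass E E (· + ·) (· ≤ ·)]
    -- `E` is a lattice-ordered algebra:
    (hmul_pos : ∀ x y : E, 0 ≤ x → 0 ≤ y → 0 ≤ x * y)
    -- the `f`-algebra property:
    (hf_alg : ∀ x y z : E, x ⊓ y = 0 → 0 ≤ z → (x * z) ⊓ y = 0)
    -- `E` is universally complete:
    (hDed : DedekindComplete E)
    -- the identity `e = 1` is a positive weak order unit: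
    (h1_pos : (0 : E) ≤ 1) (h1_unit : ∀ x : E, 0 ≤ x → x ⊓ 1 = 0 → x = 0)
    (x : ℕ → E) (hx : ∀ n, 0 ≤ x n) :
    ∃ v : ℕ → E,
      (∀ n, (1 + ∑ i ∈ Finset.Icc 1 n, x i) * v n = 1 ∧ 0 ≤ v n ∧ v n ≤ 1) ∧
      ∃ s : E, s ≤ 1 ∧
        OrderConvSeq (fun N => ∑ n ∈ Finset.Icc 1 N, x n * (v n) ^ 2) s := by
  choose v hv using fun n => exists_mul_eq_one_of_one_le hmul_pos hf_alg hDed h1_pos h1_unit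
    (le_add_of_nonneg_right (Finset.sum_nonneg fun i _ => hx i) :
      1 ≤ 1 + ∑ i ∈ Finset.Icc 1 n, x i)
  refine ⟨v, hv, ?_⟩
  have hv_one : v 0 = 1 := by simpa using (hv 0).1
  set S : ℕ → E := fun N => ∑ n ∈ Finset.Icc 1 N, x n * v n ^ 2 with hS
  have hS_le : ∀ N, S N ≤ 1 := fun N =>
    (sum_Icc_mul_sq_le_sub hmul_pos hx (fun n => (hv n).2.1) (fun n => (hv n).1) N).trans
      (hv_one ▸ sub_le_self 1 (hv N).2.1)
  have hS_mono : Monotone S := monotone_nat_of_le_succ fun N => by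
    simp only [hS]
    rw [Finset.sum_Icc_succ_top (by omega)]
    exact le_add_of_nonneg_right
      (hmul_pos _ _ (hx _) (sq (v (N + 1)) ▸ hmul_pos _ _ (hv _).2.1 (hv _).2.1))
  obtain ⟨s, hs⟩ := hDed (range S) (range_nonempty S) ⟨1, forall_mem_range.2 hS_le⟩
  exact ⟨s, hs.2 (forall_mem_range.2 hS_le), orderConvSeq_of_monotone_of_isLUB hS_mono hs⟩

/-- Theorem. Let `E` be a universally complete `f`-algebra whose multiplicative identity
`e = 1` is a weak order unit.  Let `(x_n)_{n ≥ 1}` be a sequence in `E⁺` and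
`R_n = ∑_{i=1}^n x_i`.  Then each `e + R_n` has a multiplicative inverse `v n` in `E`
with `0 ≤ v n ≤ e`, the series `∑ x_n (e + R_n)⁻²` converges in order in `E`, and its
sum is at most `e`. -/
theorem falgebra_sum_xn_inv_sq_le_one
    {E : Type*} [Lattice E] [CommRing E] [Module ℝ E]
    [CovariantClass E E (· + ·) (· ≤ ·)]
    -- `E` is a lattice-ordered algebra:
    (hmul_pos : ∀ x y : E, 0 ≤ x → 0 ≤ y → 0 ≤ x * y)
    -- the `f`-algebra property:
    (hf_alg : ∀ x y z : E, x ⊓ y = 0 → 0 ≤ z → (x * z) ⊓ y = 0)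
    -- `E` is universally complete:
    (hDed : DedekindComplete E) (hLat : LaterallyComplete E)
    -- the identity `e = 1` is a positive weak order unit:
    (h1_pos : (0 : E) ≤ 1) (h1_unit : ∀ x : E, 0 ≤ x → x ⊓ 1 = 0 → x = 0)
    (x : ℕ → E) (hx : ∀ n, 0 ≤ x n) :
    ∃ v : ℕ → E,
      (∀ n, (1 + ∑ i ∈ Finset.Icc 1 n, x i) * v n = 1 ∧ 0 ≤ v n ∧ v n ≤ 1) ∧
      ∃ s : E, s ≤ 1 ∧
        OrderConvSeq (fun N => ∑ n ∈ Finset.Icc 1 N, x n * (v n) ^ 2) s :=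
  falgebra_sum_xn_inv_sq_le_one_general hmul_pos hf_alg hDed h1_pos h1_unit x hx
end

section
/- For every sequence (a_n)_{n≥1} of nonnegative real numbers, with R_n = Σ_{i=1}^{n} a_i, the series Σ_{n=1}^{∞} a_n / (1 + R_n)² converges and its sum satisfies Σ_{n=1}^{∞} a_n / (1 + R_n)² ≤ 1. -/
open Filter

/-- For every sequence `(a_n)_{n ≥ 1}` of nonnegative reals, with
`R_n = ∑_{i=1}^n a_i`, the series `∑_{n=1}^∞ a_n / (1 + R_n)²` converges and its sum is
at most `1`. -/
theorem sum_div_one_add_partial_sum_sq_le_one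
    (a : ℕ → ℝ) (ha : ∀ n, 0 ≤ a n) :
    ∃ l : ℝ, l ≤ 1 ∧
      Tendsto (fun N => ∑ n ∈ Finset.Icc 1 N,
        a n / (1 + ∑ i ∈ Finset.Icc 1 n, a i) ^ 2) atTop (nhds l) := by
  set R : ℕ → ℝ := fun n => ∑ i ∈ Finset.Icc 1 n, a i with hR
  set S : ℕ → ℝ := fun N => ∑ n ∈ Finset.Icc 1 N, a n / (1 + R n) ^ 2 with hS
  have hRnonneg : ∀ n, 0 ≤ R n := fun n => Finset.sum_nonneg fun i _ => ha i
  have hRpos : ∀ n, 0 < 1 + R n := fun n => by linarith [hRnonneg n]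
  have hRmono : ∀ n, R n ≤ R (n + 1) := by
    intro n
    apply Finset.sum_le_sum_of_subset_of_nonneg
    · apply Finset.Icc_subset_Icc_right; omega
    · intro i _ _; exact ha i
  have hRstep : ∀ n, R (n + 1) = R n + a (n + 1) := by
    intro n
    simp only [hR]
    rw [← Finset.sum_Icc_succ_top (by omega : 1 ≤ n + 1)]
  have key : ∀ N, S N ≤ 1 - 1 / (1 + R N) := by
    intro N
    induction N with
    | zero => simp [hS, hR]
    | succ n ih =>
      have hstep : S (n + 1) = S n + a (n + 1) / (1 + R (n + 1)) ^ 2 := by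
        simp only [hS]
        rw [← Finset.sum_Icc_succ_top (by omega : 1 ≤ n + 1)]
      have h1 : a (n + 1) / (1 + R (n + 1)) ^ 2 ≤
          1 / (1 + R n) - 1 / (1 + R (n + 1)) := by
        have hpn := hRpos n
        have hps := hRpos (n + 1)
        rw [div_sub_div _ _ (ne_of_gt hpn) (ne_of_gt hps),
          div_le_div_iff₀ (by positivity) (mul_pos hpn hps)]
        have e := hRstep n
        nlinarith [mul_nonneg (mul_nonneg (ha (n + 1)) hps.le) (sub_nonneg.mpr (hRmono n)), e]
      rw [hstep]
      linarith
  have hSmono : Monotone S := by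
    apply monotone_nat_of_le_succ
    intro n
    have hstep : S (n + 1) = S n + a (n + 1) / (1 + R (n + 1)) ^ 2 := by
      simp only [hS]
      rw [← Finset.sum_Icc_succ_top (by omega : 1 ≤ n + 1)]
    rw [hstep]
    have : 0 ≤ a (n + 1) / (1 + R (n + 1)) ^ 2 :=
      div_nonneg (ha (n + 1)) (sq_nonneg _)
    linarith
  have hbdd : BddAbove (Set.range S) := by
    refine ⟨1, ?_⟩
    rintro x ⟨N, rfl⟩
    have := key N
    have h2 : 0 < 1 / (1 + R N) := one_div_pos.mpr (hRpos N)
    linarith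
  refine ⟨⨆ N, S N, ?_, tendsto_atTop_ciSup hSmono hbdd⟩
  apply ciSup_le
  intro N
  have := key N
  have h2 : 0 < 1 / (1 + R N) := one_div_pos.mpr (hRpos N)
  linarith
end
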